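/- arXiv:1110.6917 — 4 statements merged into one kernel-verified Lean document; each statement's English description precedes it below -/
import Mathlib

section
/- Let τ ∈ ℍ and α ∈ ℂ with θ(α,τ) ≠ 0. For ξ ∈ ℂ write r(ξ) = Im(ξ)/Im(τ), and set g(ξ) = e(α·r(ξ))·F(ξ,α,τ) wherever θ(ξ,τ) ≠ 0. Then for every ξ ∈ ℂ such that θ(ξ,τ), θ(ξ+1,τ) and θ(ξ+τ,τ) are all nonzero: g(ξ+1) = g(ξ) and g(ξ+τ) = g(ξ); that is, g is invariant under translation by the lattice ℤ+ℤτ. -/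
open Complex Filter

/-- `e(x) = exp(2πi·x)`. -/
noncomputable def ee (x : ℂ) : ℂ := Complex.exp (2 * (Real.pi : ℂ) * Complex.I * x)

/-- The theta function `θ(ξ,τ)`, with `q = e(τ)`. -/
noncomputable def theta (ξ τ : ℂ) : ℂ :=
  ee (τ / 12) * (ee (ξ / 2) - ee (-ξ / 2)) *
    ∏' j : ℕ, ((1 - ee τ ^ (j + 1) * ee ξ) * (1 - ee τ ^ (j + 1) * ee (-ξ)))

/-- `θ′`, the derivative of the theta function in the first variable. -/
noncomputable def thetaD (ξ τ : ℂ) : ℂ := deriv (fun z => theta z τ) ξ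

/-- The Kronecker function `F(ξ,η,τ)`. -/
noncomputable def KF (ξ η τ : ℂ) : ℂ :=
  thetaD 0 τ * theta (ξ + η) τ / (theta ξ τ * theta η τ)

/-!
Write `q = e(τ)`. Since `e` has period `1`, `θ(ξ + 1) = -θ(ξ)`. Translating `ξ` by `τ`
multiplies `e(ξ)` by `q` and `e(-ξ)` by `q⁻¹`, which shifts the index of the two halves of the
product in opposite directions: one factor `1 - q·e(ξ)` leaves the product and one factor
`1 - e(-ξ)` enters it, and comparing them with the prefactor gives
`θ(ξ + τ) = -e(-τ/2 - ξ)·θ(ξ)`.  Hence `F(ξ + 1, α) = F(ξ, α)` and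
`F(ξ + τ, α) = e(-α)·F(ξ, α)`, while `r(ξ + 1) = r(ξ)` and `r(ξ + τ) = r(ξ) + 1`, so the factor
`e(α·r(ξ))` exactly compensates.
-/

lemma ee_add (x y : ℂ) : ee (x + y) = ee x * ee y := by
  rw [ee, ee, ee, ← Complex.exp_add]
  ring_nf

lemma ee_ne_zero (x : ℂ) : ee x ≠ 0 := Complex.exp_ne_zero _

lemma ee_neg (x : ℂ) : ee (-x) = (ee x)⁻¹ := by
  rw [ee, ee, ← Complex.exp_neg]
  ring_nf

lemma ee_one : ee 1 = 1 := by
  rw [ee, mul_one, Complex.exp_two_pi_mul_I]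

lemma ee_half : ee (1 / 2) = -1 := by
  rw [ee, show 2 * (Real.pi : ℂ) * Complex.I * (1 / 2) = Real.pi * Complex.I by ring,
    Complex.exp_pi_mul_I]

lemma ee_add_one (x : ℂ) : ee (x + 1) = ee x := by
  rw [ee_add, ee_one, mul_one]

lemma ee_sub_one (x : ℂ) : ee (x - 1) = ee x := by
  rw [← ee_add_one (x - 1), sub_add_cancel]

lemma ee_add_half (x : ℂ) : ee (x + 1 / 2) = -ee x := by
  rw [ee_add, ee_half, mul_neg_one]

lemma ee_sub_half (x : ℂ) : ee (x - 1 / 2) = -ee x := by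
  rw [← neg_neg (ee (x - 1 / 2)), ← ee_add_half, sub_add_cancel]

lemma norm_ee_lt_one {τ : ℂ} (hτ : 0 < τ.im) : ‖ee τ‖ < 1 := by
  rw [ee, Complex.norm_exp, Real.exp_lt_one_iff]
  simpa [Complex.mul_re] using mul_pos (mul_pos two_pos Real.pi_pos) hτ

noncomputable def qProd (q c : ℂ) : ℂ := ∏' j : ℕ, (1 - q ^ (j + 1) * c)

lemma multipliable_one_sub_pow_succ_mul {q : ℂ} (hq : ‖q‖ < 1) (c : ℂ) :
    Multipliable fun j : ℕ => 1 - q ^ (j + 1) * c := by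
  simp_rw [sub_eq_add_neg]
  refine multipliable_one_add_of_summable ?_
  simp_rw [norm_neg, norm_mul, norm_pow]
  exact ((summable_nat_add_iff 1).mpr
    (summable_geometric_of_lt_one (norm_nonneg q) hq)).mul_right ‖c‖

lemma qProd_eq_one_sub_mul_qProd {q : ℂ} (hq : ‖q‖ < 1) (c : ℂ) :
    qProd q c = (1 - q * c) * qProd q (q * c) := by
  have hshift : (fun j : ℕ => 1 - q ^ (j + 1 + 1) * c) = fun j => 1 - q ^ (j + 1) * (q * c) := by
    funext j
    ring
  rw [qProd, tprod_eq_zero_mul' (hshift ▸ multipliable_one_sub_pow_succ_mul hq (q * c)),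
    zero_add, pow_one, hshift, qProd]

lemma theta_eq_qProd {τ : ℂ} (hτ : 0 < τ.im) (ξ : ℂ) :
    theta ξ τ = ee (τ / 12) * (ee (ξ / 2) - ee (-ξ / 2)) *
      (qProd (ee τ) (ee ξ) * qProd (ee τ) (ee (-ξ))) := by
  have hq := norm_ee_lt_one hτ
  rw [theta, qProd, qProd, ← (multipliable_one_sub_pow_succ_mul hq _).tprod_mul
    (multipliable_one_sub_pow_succ_mul hq _)]

lemma theta_add_one (ξ τ : ℂ) : theta (ξ + 1) τ = -theta ξ τ := by
  have hpos : (ξ + 1) / 2 = ξ / 2 + 1 / 2 := by ring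
  have hneg : -(ξ + 1) / 2 = -ξ / 2 - 1 / 2 := by ring
  rw [theta, theta, hpos, hneg, ee_add_half, ee_sub_half, ee_add_one, neg_add, ← sub_eq_add_neg,
    ee_sub_one]
  ring

lemma theta_prefactor_add_tau (ξ τ : ℂ) :
    (ee ((ξ + τ) / 2) - ee (-(ξ + τ) / 2)) * (1 - ee (-ξ)) =
      -ee (-τ / 2 - ξ) * (ee (ξ / 2) - ee (-ξ / 2)) * (1 - ee τ * ee ξ) := by
  have hsq (x : ℂ) : ee x = ee (x / 2) * ee (x / 2) := by rw [← ee_add, add_halves]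
  have h1 : ee ((ξ + τ) / 2) = ee (ξ / 2) * ee (τ / 2) := by rw [← ee_add, add_div]
  have h2 : ee (-(ξ + τ) / 2) = (ee (ξ / 2) * ee (τ / 2))⁻¹ := by rw [← h1, ← ee_neg, neg_div]
  have h3 : ee (-ξ / 2) = (ee (ξ / 2))⁻¹ := by rw [← ee_neg, neg_div]
  have h4 : ee (-τ / 2 - ξ) = (ee (τ / 2) * ee ξ)⁻¹ := by rw [← ee_add, ← ee_neg]; ring_nf
  have ha := ee_ne_zero (ξ / 2)
  have hb := ee_ne_zero (τ / 2)
  rw [h1, h2, h3, h4, ee_neg, hsq ξ, hsq τ]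
  field_simp
  ring

lemma theta_add_tau {τ : ℂ} (hτ : 0 < τ.im) (ξ : ℂ) :
    theta (ξ + τ) τ = -ee (-τ / 2 - ξ) * theta ξ τ := by
  have hq := norm_ee_lt_one hτ
  have hu : ee (ξ + τ) = ee τ * ee ξ := by rw [ee_add, mul_comm]
  have hv : ee τ * ee (-(ξ + τ)) = ee (-ξ) := by rw [← ee_add]; ring_nf
  rw [theta_eq_qProd hτ, theta_eq_qProd hτ, hu, qProd_eq_one_sub_mul_qProd hq (ee (-(ξ + τ))), hv,
    qProd_eq_one_sub_mul_qProd hq (ee ξ)]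
  linear_combination (ee (τ / 12) * qProd (ee τ) (ee τ * ee ξ) * qProd (ee τ) (ee (-ξ))) *
    theta_prefactor_add_tau ξ τ

lemma KF_add_one (ξ η τ : ℂ) : KF (ξ + 1) η τ = KF ξ η τ := by
  rw [KF, KF, add_right_comm, theta_add_one, theta_add_one, mul_neg, neg_mul, neg_div_neg_eq]

lemma KF_add_tau {τ : ℂ} (hτ : 0 < τ.im) (ξ η : ℂ) : KF (ξ + τ) η τ = ee (-η) * KF ξ η τ := by
  have hfactor : ee (-τ / 2 - (ξ + η)) = ee (-τ / 2 - ξ) * ee (-η) := by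
    rw [← ee_add]
    ring_nf
  rw [KF, KF, add_right_comm, theta_add_tau hτ, theta_add_tau hτ, hfactor]
  have hc := ee_ne_zero (-τ / 2 - ξ)
  generalize ee (-τ / 2 - ξ) = c at hc ⊢
  field_simp

theorem stmt_9_general (τ α : ℂ) (hτ : 0 < τ.im) :
    ∀ ξ : ℂ, theta ξ τ ≠ 0 → theta (ξ + 1) τ ≠ 0 → theta (ξ + τ) τ ≠ 0 →
      ee (α * (((ξ + 1).im / τ.im : ℝ) : ℂ)) * KF (ξ + 1) α τ =
        ee (α * ((ξ.im / τ.im : ℝ) : ℂ)) * KF ξ α τ ∧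
      ee (α * (((ξ + τ).im / τ.im : ℝ) : ℂ)) * KF (ξ + τ) α τ =
        ee (α * ((ξ.im / τ.im : ℝ) : ℂ)) * KF ξ α τ := by
  intro ξ _ _ _
  have hr_add_tau : ((ξ + τ).im / τ.im : ℝ) = ξ.im / τ.im + 1 := by
    rw [Complex.add_im, add_div, div_self hτ.ne']
  refine ⟨by rw [Complex.add_im, Complex.one_im, add_zero, KF_add_one], ?_⟩
  rw [hr_add_tau, KF_add_tau hτ, Complex.ofReal_add, Complex.ofReal_one, mul_add_one, ee_add,
    ee_neg, mul_assoc, mul_inv_cancel_left₀ (ee_ne_zero α)]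

/-- For `ξ = s + rτ` write `r(ξ) = Im ξ / Im τ`.  The function
`g(ξ) = e(α·r(ξ))·F(ξ,α,τ)` is invariant under translation by `ℤ + ℤτ`. -/
theorem stmt_9 (τ α : ℂ) (hτ : 0 < τ.im) (hα : theta α τ ≠ 0) :
    ∀ ξ : ℂ, theta ξ τ ≠ 0 → theta (ξ + 1) τ ≠ 0 → theta (ξ + τ) τ ≠ 0 →
      ee (α * (((ξ + 1).im / τ.im : ℝ) : ℂ)) * KF (ξ + 1) α τ =
        ee (α * ((ξ.im / τ.im : ℝ) : ℂ)) * KF ξ α τ ∧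
      ee (α * (((ξ + τ).im / τ.im : ℝ) : ℂ)) * KF (ξ + τ) α τ =
        ee (α * ((ξ.im / τ.im : ℝ) : ℂ)) * KF ξ α τ :=
  stmt_9_general τ α hτ
end

section
/- Let 0 < q < 1 be real, r ≥ 1, n₁,…,n_r ≥ 1, and let f be a holomorphic branch of I_{n₁,…,n_r} on ℍ^r. Let t₁,…,t_r ∈ ℍ with q < |t₁| < |t₂| < ⋯ < |t_r| < 1 and t_i/t_j ∉ ℝ_{>0} for all i ≠ j, and let u₁,…,u_r ∈ ℂ with 1 < |u_i| < q^{−1} for all i. Then the family indexed by (m₁,…,m_r) ∈ ℤ^r with terms u₁^{m₁}⋯u_r^{m_r}·f(q^{m₁}·t₁, …, q^{m_r}·t_r) is absolutely summable (note that q^m·t ∈ ℍ for real q > 0, so all values are defined). -/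
open Complex Filter

/-- The multiple polylogarithm
`I_{n₁,…,n_r}(t₁,…,t_r) = ∑_{a₁,…,a_r ≥ 1} t₁^{a₁}⋯t_r^{a_r} /
  (a₁^{n₁}·(a₁+a₂)^{n₂}⋯(a₁+⋯+a_r)^{n_r})`. -/
noncomputable def mpl (r : ℕ) (nn : Fin r → ℕ) (t : Fin r → ℂ) : ℂ :=
  ∑' a : Fin r → ℕ,
    (∏ i, t i ^ (a i + 1)) / ∏ i, (∑ j ∈ Finset.Iic i, ((a j : ℂ) + 1)) ^ nn i

/-- The polydisc `ℍ^r` (each coordinate in the open upper half-plane). -/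
def UpperPoly (r : ℕ) : Set (Fin r → ℂ) := {t | ∀ i, 0 < (t i).im}

/-- A holomorphic branch of `I_{n₁,…,n_r}` on `ℍ^r`: holomorphic on `ℍ^r` and
agreeing with the defining series whenever all `|t_i| < 1`. -/
def IsMplBranch (r : ℕ) (nn : Fin r → ℕ) (f : (Fin r → ℂ) → ℂ) : Prop :=
  DifferentiableOn ℂ f (UpperPoly r) ∧
  ∀ t ∈ UpperPoly r, (∀ i, ‖t i‖ < 1) → f t = mpl r nn t

/-!
For `Im tⱼ > 0` the multiple polylogarithm has the integral representation
`∏ᵢ (nᵢ-1)!⁻¹ ∫_{(0,∞)^r} ∏ᵢ xᵢ^(nᵢ-1) ∏ⱼ k(tⱼ e^{-yⱼ}) dx`, where `k(z) = z/(1-z)` and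
`yⱼ = xⱼ + ⋯ + x_r`. On the polydisc this is the defining series: expand each `k` geometrically
and use `∑ⱼ (aⱼ+1) yⱼ = ∑ᵢ (a₁+1 + ⋯ + aᵢ+1) xᵢ`, which turns every term into a product of Gamma
integrals. The integral is holomorphic in each `tⱼ` separately, so the one-variable identity
theorem, applied one coordinate at a time, identifies it with any holomorphic branch on `ℍ^r`.

Since `|k(z)| ≤ (|z| / Im z) min(1, |z|) ≤ (|z| / Im z) |z|^θ` for `θ ∈ [0, 1]` and `|z| / Im z`
is invariant under `z ↦ qᵐ z`, the branch at `(q^{m₁}t₁, …, q^{m_r}t_r)` is bounded by a constant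
times `∏ⱼ q^{θⱼ mⱼ}`, the constant depending only on a lower bound for the `θⱼ`. Taking `θⱼ = 1`
when `mⱼ ≥ 0` and `θⱼ` small when `mⱼ < 0` bounds the family by a product of two-sided geometric
series.
-/

open MeasureTheory Finset

noncomputable section

namespace MultiplePolylog

section PiProd

variable {β R : Type*} [NormedCommRing R]

lemma prod_comp_consEquiv {M : Type*} [CommMonoid M] {n : ℕ} (f : Fin (n + 1) → β → M)
    (p : β × (Fin n → β)) :
    ∏ i, f i (Fin.consEquiv (fun _ => β) p i) = f 0 p.1 * ∏ i : Fin n, f i.succ (p.2 i) := by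
  simp [Fin.prod_univ_succ, Fin.consEquiv]

lemma summable_norm_pi_prod {n : ℕ} (f : Fin n → β → R)
    (hf : ∀ i, Summable fun k => ‖f i k‖) :
    Summable fun a : Fin n → β => ‖∏ i, f i (a i)‖ := by
  induction n with
  | zero => exact Summable.of_finite
  | succ n ih =>
    rw [← (Fin.consEquiv fun _ => β).summable_iff]
    simpa only [Function.comp_def, prod_comp_consEquiv] using
      (hf 0).mul_norm (ih (fun i => f i.succ) fun i => hf i.succ)

lemma hasSum_pi_prod [CompleteSpace R] {n : ℕ} (f : Fin n → β → R)
    (hf : ∀ i, Summable fun k => ‖f i k‖) :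
    HasSum (fun a : Fin n → β => ∏ i, f i (a i)) (∏ i, ∑' k, f i k) := by
  induction n with
  | zero => simp
  | succ n ih =>
    rw [← (Fin.consEquiv fun _ => β).hasSum_iff]
    simp only [Function.comp_def, prod_comp_consEquiv]
    have hg := summable_norm_pi_prod (fun i => f i.succ) fun i => hf i.succ
    rw [Fin.prod_univ_succ, ← (ih (fun i => f i.succ) fun i => hf i.succ).tsum_eq,
      tsum_mul_tsum_of_summable_norm (hf 0) hg]
    exact (summable_mul_of_summable_norm (hf 0) hg).hasSum

end PiProd

lemma eqOn_univ_pi_of_differentiableOn_update {ι : Type*} [Fintype ι] [DecidableEq ι]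
    {U V : ι → Set ℂ} (hU : ∀ i, IsOpen (U i)) (hUc : ∀ i, IsPreconnected (U i))
    (hV : ∀ i, IsOpen (V i)) (hVne : ∀ i, (V i).Nonempty) (hVU : ∀ i, V i ⊆ U i)
    {f g : (ι → ℂ) → ℂ}
    (hf : ∀ s ∈ Set.univ.pi U, ∀ i, DifferentiableOn ℂ (fun z => f (Function.update s i z)) (U i))
    (hg : ∀ s ∈ Set.univ.pi U, ∀ i, DifferentiableOn ℂ (fun z => g (Function.update s i z)) (U i))
    (hfg : Set.EqOn f g (Set.univ.pi V)) : Set.EqOn f g (Set.univ.pi U) := by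
  -- Enlarge one coordinate at a time the set `S` of coordinates allowed to leave `V`.
  suffices ∀ S : Finset ι, ∀ s ∈ Set.univ.pi U, (∀ j ∉ S, s j ∈ V j) → f s = g s from
    fun s hs => this univ s hs fun j hj => absurd (mem_univ j) hj
  intro S
  induction S using Finset.induction_on with
  | empty => exact fun s _ hsV => hfg (Set.mem_univ_pi.2 fun j => hsV j (notMem_empty j))
  | insert i S _ ih =>
    intro s hs hsV
    have hupd : ∀ z ∈ U i, Function.update s i z ∈ Set.univ.pi U := fun z hz =>
      (Set.update_mem_pi_iff_of_mem hs).2 fun _ => hz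
    obtain ⟨z₀, hz₀⟩ := hVne i
    have hslice : Set.EqOn (fun z => f (Function.update s i z)) (fun z => g (Function.update s i z))
        (U i) := by
      refine ((hf s hs i).analyticOnNhd (hU i)).eqOn_of_preconnected_of_eventuallyEq
        ((hg s hs i).analyticOnNhd (hU i)) (hUc i) (hVU i hz₀) ?_
      filter_upwards [(hV i).mem_nhds hz₀] with z hz
      refine ih _ (hupd z (hVU i hz)) fun j hj => ?_
      rcases eq_or_ne j i with rfl | hji
      · simpa using hz
      · simpa [hji] using hsV j (by simp [hji, hj])
    simpa using hslice (Set.mem_univ_pi.1 hs i)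

lemma exists_rpow_mul_gt_one {q a : ℝ} (hq : 0 < q) (ha : 1 < a) :
    ∃ θ : ℝ, 0 < θ ∧ θ ≤ 1 ∧ 1 < a * q ^ θ := by
  have hlim : Tendsto (fun θ => a * q ^ θ) (nhdsWithin (0 : ℝ) (Set.Ioi 0)) (nhds a) := by
    have : ContinuousAt (fun θ : ℝ => a * q ^ θ) 0 :=
      continuousAt_const.mul (Real.continuousAt_const_rpow hq.ne')
    simpa using this.tendsto.mono_left nhdsWithin_le_nhds
  obtain ⟨θ, ⟨hθ0, hθ1⟩, hθ⟩ :=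
    (Eventually.and (Ioc_mem_nhdsGT one_pos) (hlim.eventually (lt_mem_nhds ha))).exists
  exact ⟨θ, hθ0, hθ1, hθ⟩

lemma summable_int_ite_geometric {ρ₁ ρ₂ : ℝ} (h₁0 : 0 ≤ ρ₁) (h₁ : ρ₁ < 1) (h₂ : 1 < ρ₂)
    (C₁ C₂ : ℝ) : Summable fun k : ℤ => if 0 ≤ k then C₁ * ρ₁ ^ k else C₂ * ρ₂ ^ k := by
  refine .of_nat_of_neg_add_one ?_ ?_
  · simpa using (summable_geometric_of_lt_one h₁0 h₁).mul_left C₁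
  · have h₂' : 0 < ρ₂ := one_pos.trans h₂
    refine ((summable_geometric_of_lt_one (inv_nonneg.2 h₂'.le)
      (inv_lt_one_of_one_lt₀ h₂)).mul_left (C₂ * ρ₂⁻¹)).congr fun n => ?_
    rw [if_neg (by omega), zpow_neg, ← Nat.cast_succ, zpow_natCast, inv_pow, pow_succ, mul_inv]
    ring

def powWeight (n : ℕ) : ℝ → ℝ := (Set.Ioi 0).indicator fun v => v ^ (n - 1)

lemma powWeight_nonneg (n : ℕ) (v : ℝ) : 0 ≤ powWeight n v :=
  Set.indicator_nonneg (fun w (hw : 0 < w) => by positivity) v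

lemma powWeight_of_nonpos {n : ℕ} {v : ℝ} (hv : v ≤ 0) : powWeight n v = 0 :=
  Set.indicator_of_notMem (not_lt.2 hv) _

lemma measurable_powWeight (n : ℕ) : Measurable (powWeight n) :=
  (measurable_id.pow_const _).indicator measurableSet_Ioi

lemma powWeight_mul_eq_indicator (n : ℕ) (g : ℝ → ℝ) :
    (fun v => powWeight n v * g v) = (Set.Ioi 0).indicator fun v => v ^ (n - 1) * g v := by
  ext v
  by_cases hv : v ∈ Set.Ioi (0 : ℝ) <;> simp [powWeight, Set.indicator, hv]

lemma rpow_natCast_sub_one {n : ℕ} (hn : 1 ≤ n) (v : ℝ) : v ^ ((n : ℝ) - 1) = v ^ (n - 1) := by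
  rw [← Real.rpow_natCast, Nat.cast_sub hn, Nat.cast_one]

lemma integrable_powWeight_mul_exp {n : ℕ} (hn : 1 ≤ n) {c : ℝ} (hc : 0 < c) :
    Integrable fun v => powWeight n v * Real.exp (-(c * v)) := by
  rw [powWeight_mul_eq_indicator, integrable_indicator_iff measurableSet_Ioi]
  have h := integrableOn_rpow_mul_exp_neg_mul_rpow (s := (n : ℝ) - 1) (p := 1)
    (by linarith [(Nat.one_le_cast (α := ℝ)).2 hn]) one_pos hc
  simpa only [rpow_natCast_sub_one hn, Real.rpow_one, neg_mul] using h

lemma integral_powWeight_mul_exp {n : ℕ} (hn : 1 ≤ n) {c : ℝ} (hc : 0 < c) :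
    ∫ v, powWeight n v * Real.exp (-(c * v)) = (n - 1).factorial / c ^ n := by
  rw [powWeight_mul_eq_indicator, integral_indicator measurableSet_Ioi]
  have h := Real.integral_rpow_mul_exp_neg_mul_Ioi (a := n) (by positivity) hc
  have hΓ : Real.Gamma n = (n - 1).factorial := by
    rw [← Real.Gamma_nat_eq_factorial, Nat.cast_sub hn, Nat.cast_one, sub_add_cancel]
  simp only [rpow_natCast_sub_one hn, Real.rpow_natCast, hΓ] at h
  rw [h, div_pow, one_pow]
  ring

variable {r : ℕ}

def tailSum (x : Fin r → ℝ) (j : Fin r) : ℝ := ∑ i ∈ Ici j, x i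

lemma continuous_tailSum (j : Fin r) : Continuous fun x : Fin r → ℝ => tailSum x j :=
  continuous_finsetSum _ fun i _ => continuous_apply i

lemma tailSum_pos {x : Fin r → ℝ} (hx : ∀ i, 0 < x i) (j : Fin r) : 0 < tailSum x j :=
  sum_pos (fun i _ => hx i) ⟨j, mem_Ici.2 le_rfl⟩

lemma sum_mul_tailSum (b x : Fin r → ℝ) :
    ∑ j, b j * tailSum x j = ∑ i, (∑ j ∈ Iic i, b j) * x i := by
  simp only [tailSum, mul_sum, sum_mul]
  rw [sum_comm' (t' := univ) (s' := fun i => Iic i)]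
  intro j i
  simp

def expWeight (nn : Fin r → ℕ) (b x : Fin r → ℝ) : ℝ :=
  (∏ i, powWeight (nn i) (x i)) * ∏ j, Real.exp (-(b j * tailSum x j))

lemma expWeight_nonneg (nn : Fin r → ℕ) (b x : Fin r → ℝ) : 0 ≤ expWeight nn b x :=
  mul_nonneg (prod_nonneg fun i _ => powWeight_nonneg _ _) (prod_nonneg fun _ _ => by positivity)

lemma expWeight_of_nonpos (nn : Fin r → ℕ) (b : Fin r → ℝ) {x : Fin r → ℝ}
    {i : Fin r} (hi : x i ≤ 0) : expWeight nn b x = 0 := by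
  rw [expWeight, prod_eq_zero (mem_univ i) (powWeight_of_nonpos hi), zero_mul]

lemma expWeight_eq_prod (nn : Fin r → ℕ) (b x : Fin r → ℝ) :
    expWeight nn b x =
      ∏ i, powWeight (nn i) (x i) * Real.exp (-((∑ j ∈ Iic i, b j) * x i)) := by
  rw [expWeight, prod_mul_distrib, ← Real.exp_sum, ← Real.exp_sum, sum_neg_distrib,
    sum_neg_distrib, sum_mul_tailSum]

lemma integrable_expWeight {nn : Fin r → ℕ} (hnn : ∀ i, 1 ≤ nn i) {b : Fin r → ℝ}
    (hb : ∀ j, 0 < b j) : Integrable (expWeight nn b) := by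
  simp_rw [funext (expWeight_eq_prod nn b)]
  exact Integrable.fintype_prod
    (f := fun i v => powWeight (nn i) v * Real.exp (-((∑ j ∈ Iic i, b j) * v)))
    fun i => integrable_powWeight_mul_exp (hnn i) (sum_pos (fun j _ => hb j) ⟨i, by simp⟩)

lemma integral_expWeight {nn : Fin r → ℕ} (hnn : ∀ i, 1 ≤ nn i) {b : Fin r → ℝ}
    (hb : ∀ j, 0 < b j) :
    ∫ x, expWeight nn b x = ∏ i, (nn i - 1).factorial / (∑ j ∈ Iic i, b j) ^ nn i := by
  simp_rw [expWeight_eq_prod nn b]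
  rw [integral_fintype_prod_volume_eq_prod
    (f := fun i v => powWeight (nn i) v * Real.exp (-((∑ j ∈ Iic i, b j) * v)))]
  exact prod_congr rfl fun i _ =>
    integral_powWeight_mul_exp (hnn i) (sum_pos (fun j _ => hb j) ⟨i, by simp⟩)

def weightedIntegrand (nn : Fin r → ℕ) (φ : Fin r → ℝ → ℂ) (x : Fin r → ℝ) : ℂ :=
  ((∏ i, powWeight (nn i) (x i) : ℝ) : ℂ) * ∏ j, φ j (tailSum x j)

lemma weightedIntegrand_of_nonpos (nn : Fin r → ℕ) (φ : Fin r → ℝ → ℂ) {x : Fin r → ℝ}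
    {i : Fin r} (hi : x i ≤ 0) : weightedIntegrand nn φ x = 0 := by
  rw [weightedIntegrand, prod_eq_zero (mem_univ i) (powWeight_of_nonpos hi), ofReal_zero, zero_mul]

lemma weightedIntegrand_const_mul_exp (nn : Fin r → ℕ) (α : Fin r → ℂ) (b x : Fin r → ℝ) :
    weightedIntegrand nn (fun j y => α j * (Real.exp (-(b j * y)) : ℂ)) x =
      (∏ j, α j) * expWeight nn b x := by
  simp only [weightedIntegrand, expWeight, prod_mul_distrib]
  push_cast
  ring

lemma weightedIntegrand_update (nn : Fin r → ℕ) (φ : Fin r → ℝ → ℂ) (i : Fin r) (ψ : ℝ → ℂ)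
    (x : Fin r → ℝ) :
    weightedIntegrand nn (Function.update φ i ψ) x =
      weightedIntegrand nn (Function.update φ i 1) x * ψ (tailSum x i) := by
  have key : ∀ ψ' : ℝ → ℂ, ∏ j, Function.update φ i ψ' j (tailSum x j) =
      ψ' (tailSum x i) * ∏ j ∈ univ.erase i, φ j (tailSum x j) := fun ψ' => by
    rw [← mul_prod_erase univ _ (mem_univ i), Function.update_self]
    exact congrArg _ (prod_congr rfl fun j hj => by rw [Function.update_of_ne (ne_of_mem_erase hj)])
  simp only [weightedIntegrand, key, Pi.one_apply]
  ring

lemma measurable_weightedIntegrand (nn : Fin r → ℕ) {φ : Fin r → ℝ → ℂ}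
    (hφ : ∀ j, Measurable (φ j)) : Measurable (weightedIntegrand nn φ) :=
  (Complex.measurable_ofReal.comp (Finset.measurable_prod _ fun i _ =>
    (measurable_powWeight _).comp (measurable_pi_apply i))).mul
    (Finset.measurable_prod _ fun j _ => (hφ j).comp (continuous_tailSum j).measurable)

section Bounds

variable {nn : Fin r → ℕ} {φ : Fin r → ℝ → ℂ} {C θ : Fin r → ℝ}

lemma norm_weightedIntegrand_le
    (hφ : ∀ j y, 0 < y → ‖φ j y‖ ≤ C j * Real.exp (-(θ j * y))) (x : Fin r → ℝ) :
    ‖weightedIntegrand nn φ x‖ ≤ (∏ j, C j) * expWeight nn θ x := by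
  by_cases hx : ∀ i, 0 < x i
  · have hP : 0 ≤ ∏ i, powWeight (nn i) (x i) := prod_nonneg fun i _ => powWeight_nonneg _ _
    calc ‖weightedIntegrand nn φ x‖
        = (∏ i, powWeight (nn i) (x i)) * ∏ j, ‖φ j (tailSum x j)‖ := by
          rw [weightedIntegrand, norm_mul, Complex.norm_real, Real.norm_of_nonneg hP, norm_prod]
      _ ≤ (∏ i, powWeight (nn i) (x i)) * ∏ j, (C j * Real.exp (-(θ j * tailSum x j))) := by
          gcongr with j
          exact hφ j _ (tailSum_pos hx j)
      _ = (∏ j, C j) * expWeight nn θ x := by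
          rw [expWeight, prod_mul_distrib]
          ring
  · obtain ⟨i, hi⟩ := not_forall.1 hx
    rw [weightedIntegrand_of_nonpos nn φ (not_lt.1 hi), expWeight_of_nonpos nn θ (not_lt.1 hi)]
    simp

lemma integrable_weightedIntegrand (hnn : ∀ i, 1 ≤ nn i) (hmeas : ∀ j, Measurable (φ j))
    (hφ : ∀ j y, 0 < y → ‖φ j y‖ ≤ C j * Real.exp (-(θ j * y))) (hθ : ∀ j, 0 < θ j) :
    Integrable (weightedIntegrand nn φ) :=
  ((integrable_expWeight hnn hθ).const_mul _).mono'
    (measurable_weightedIntegrand nn hmeas).aestronglyMeasurable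
    (Eventually.of_forall (norm_weightedIntegrand_le hφ))

lemma norm_integral_weightedIntegrand_le (hnn : ∀ i, 1 ≤ nn i)
    (hφ : ∀ j y, 0 < y → ‖φ j y‖ ≤ C j * Real.exp (-(θ j * y))) (hθ : ∀ j, 0 < θ j) :
    ‖∫ x, weightedIntegrand nn φ x‖ ≤
      (∏ j, C j) * ∏ i, (nn i - 1).factorial / (∑ j ∈ Iic i, θ j) ^ nn i := by
  rw [← integral_expWeight hnn hθ, ← integral_const_mul]
  exact norm_integral_le_of_norm_le ((integrable_expWeight hnn hθ).const_mul _)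
    (Eventually.of_forall (norm_weightedIntegrand_le hφ))

end Bounds

def polyKernel (z : ℂ) : ℂ := z / (1 - z)

lemma measurable_polyKernel : Measurable polyKernel :=
  measurable_id.div (measurable_const.sub measurable_id)

lemma hasSum_pow_succ_polyKernel {z : ℂ} (hz : ‖z‖ < 1) :
    HasSum (fun k : ℕ => z ^ (k + 1)) (polyKernel z) := by
  simpa only [pow_succ', polyKernel, div_eq_mul_inv] using
    (hasSum_geometric_of_norm_lt_one hz).mul_left z

lemma hasDerivAt_polyKernel {z : ℂ} (hz : 1 - z ≠ 0) :
    HasDerivAt polyKernel (1 / (1 - z) ^ 2) z := by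
  have := (hasDerivAt_id' z).div ((hasDerivAt_id' z).const_sub 1) hz
  exact this.congr_deriv (by ring)

lemma im_le_norm_one_sub (z : ℂ) : z.im ≤ ‖1 - z‖ :=
  calc z.im = -(1 - z).im := by simp
    _ ≤ |(1 - z).im| := neg_le_abs _
    _ ≤ ‖1 - z‖ := abs_im_le_norm _

-- `(1 - z) * conj z = conj z - ‖z‖²` has imaginary part `-Im z`.
lemma im_le_norm_mul_norm_one_sub (z : ℂ) : z.im ≤ ‖z‖ * ‖1 - z‖ :=
  calc z.im = -((1 - z) * (starRingEnd ℂ) z).im := by simp; ring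
    _ ≤ |((1 - z) * (starRingEnd ℂ) z).im| := neg_le_abs _
    _ ≤ ‖z‖ * ‖1 - z‖ := by
      rw [mul_comm ‖z‖, ← Complex.norm_conj z, ← norm_mul]
      exact abs_im_le_norm _

lemma norm_polyKernel_le {z : ℂ} (hz : 0 < z.im) : ‖polyKernel z‖ ≤ ‖z‖ / z.im * min 1 ‖z‖ := by
  have h1 : 0 < ‖1 - z‖ := hz.trans_le (im_le_norm_one_sub z)
  rw [polyKernel, norm_div]
  rcases le_total 1 ‖z‖ with h | h
  · rw [min_eq_left h, mul_one]
    exact div_le_div_of_nonneg_left (norm_nonneg _) hz (im_le_norm_one_sub z)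
  · rw [min_eq_right h, div_le_iff₀ h1, div_mul_eq_mul_div, div_mul_eq_mul_div, le_div_iff₀ hz,
      mul_assoc]
    exact mul_le_mul_of_nonneg_left (im_le_norm_mul_norm_one_sub z) (norm_nonneg z)

lemma min_one_le_rpow {a θ : ℝ} (ha : 0 < a) (hθ0 : 0 ≤ θ) (hθ1 : θ ≤ 1) : min 1 a ≤ a ^ θ := by
  rcases le_total 1 a with h | h
  · exact (min_le_left _ _).trans (Real.one_le_rpow h hθ0)
  · calc min 1 a ≤ a ^ (1 : ℝ) := (min_le_right _ _).trans (Real.rpow_one a).ge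
      _ ≤ a ^ θ := Real.rpow_le_rpow_of_exponent_ge ha h hθ1

lemma norm_polyKernel_mul_ofReal_le {t : ℂ} (ht : 0 < t.im) {E : ℝ} (hE : 0 < E) :
    ‖polyKernel (t * E)‖ ≤ ‖t‖ / t.im * min 1 (‖t‖ * E) := by
  have h := norm_polyKernel_le (z := t * E) (by rw [im_mul_ofReal]; positivity)
  rwa [norm_mul, Complex.norm_real, Real.norm_of_nonneg hE.le, im_mul_ofReal,
    mul_div_mul_right _ _ hE.ne'] at h

lemma norm_polyKernel_mul_exp_le {t : ℂ} (ht : 0 < t.im) {θ : ℝ} (hθ0 : 0 ≤ θ) (hθ1 : θ ≤ 1)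
    (y : ℝ) :
    ‖polyKernel (t * Real.exp (-y))‖ ≤ ‖t‖ / t.im * ‖t‖ ^ θ * Real.exp (-(θ * y)) := by
  have htn : 0 < ‖t‖ := ht.trans_le ((le_abs_self _).trans (abs_im_le_norm t))
  calc ‖polyKernel (t * Real.exp (-y))‖
      ≤ ‖t‖ / t.im * min 1 (‖t‖ * Real.exp (-y)) := norm_polyKernel_mul_ofReal_le ht (by positivity)
    _ ≤ ‖t‖ / t.im * (‖t‖ * Real.exp (-y)) ^ θ := by
        gcongr
        exact min_one_le_rpow (by positivity) hθ0 hθ1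
    _ = ‖t‖ / t.im * ‖t‖ ^ θ * Real.exp (-(θ * y)) := by
        rw [Real.mul_rpow htn.le (Real.exp_pos _).le, ← Real.exp_mul, mul_assoc]
        ring_nf

lemma one_sub_mul_ofReal_ne_zero {w : ℂ} (hw : 0 < w.im) {E : ℝ} (hE : 0 < E) :
    1 - w * E ≠ 0 := fun h => by
  simpa [im_mul_ofReal, hw.ne', hE.ne'] using congrArg im h

lemma inv_norm_one_sub_mul_le {w : ℂ} (hw : 0 < w.im) {E : ℝ} (hE : 0 < E) :
    ‖1 - w * E‖⁻¹ ≤ ‖w‖ / w.im := by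
  have h := im_le_norm_mul_norm_one_sub (w * E)
  have hpos : 0 < ‖1 - w * E‖ := norm_pos_iff.2 (one_sub_mul_ofReal_ne_zero hw hE)
  rw [im_mul_ofReal, norm_mul, Complex.norm_real, Real.norm_of_nonneg hE.le, mul_right_comm,
    mul_comm _ E, mul_comm _ E] at h
  rw [inv_le_iff_one_le_mul₀ hpos, div_mul_eq_mul_div, le_div_iff₀ hw, one_mul]
  exact le_of_mul_le_mul_left h hE

lemma norm_one_div_one_sub_mul_sq_mul_le {w : ℂ} (hw : 0 < w.im) {E : ℝ} (hE : 0 < E) :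
    ‖1 / (1 - w * E) ^ 2 * E‖ ≤ (‖w‖ / w.im) ^ 2 * E := by
  rw [norm_mul, norm_div, norm_one, norm_pow, Complex.norm_real, Real.norm_of_nonneg hE.le, one_div,
    ← inv_pow]
  gcongr
  exact inv_norm_one_sub_mul_le hw hE

lemma im_pos_and_norm_div_im_le_of_mem_ball {z₀ w : ℂ} (hz₀ : 0 < z₀.im)
    (hw : w ∈ Metric.ball z₀ (z₀.im / 2)) :
    0 < w.im ∧ ‖w‖ / w.im ≤ (‖z₀‖ + z₀.im / 2) / (z₀.im / 2) := by
  have him : z₀.im / 2 ≤ w.im := by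
    have := (abs_im_le_norm (w - z₀)).trans_lt (mem_ball_iff_norm.1 hw)
    rw [sub_im] at this
    linarith [neg_abs_le (w.im - z₀.im)]
  exact ⟨by linarith, div_le_div₀ (by positivity) (norm_lt_of_mem_ball hw).le (by positivity) him⟩

lemma differentiableOn_integral_mul_polyKernel {X : Type*} [MeasurableSpace X] {μ : Measure X}
    {h : X → ℂ} {E : X → ℝ} (hh : AEStronglyMeasurable h μ) (hE : Measurable E)
    (hE0 : ∀ x, 0 < E x) (hint : Integrable (fun x => ‖h x‖ * E x) μ) :
    DifferentiableOn ℂ (fun z => ∫ x, h x * polyKernel (z * E x) ∂μ) {z | 0 < z.im} := by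
  intro z₀ (hz₀ : 0 < z₀.im)
  set M := (‖z₀‖ + z₀.im / 2) / (z₀.im / 2)
  have hball := fun w (hw : w ∈ Metric.ball z₀ (z₀.im / 2)) =>
    im_pos_and_norm_div_im_le_of_mem_ball hz₀ hw
  have hmeas : ∀ w : ℂ, AEStronglyMeasurable (fun x => h x * polyKernel (w * E x)) μ := fun w =>
    hh.mul (measurable_polyKernel.comp
      (measurable_const.mul (Complex.measurable_ofReal.comp hE))).aestronglyMeasurable
  have hderiv : ∀ x, ∀ w ∈ Metric.ball z₀ (z₀.im / 2), HasDerivAt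
      (fun w => h x * polyKernel (w * E x)) (h x * (1 / (1 - w * E x) ^ 2 * E x)) w :=
    fun x w hw =>
      ((hasDerivAt_polyKernel (one_sub_mul_ofReal_ne_zero (hball w hw).1 (hE0 x))).comp w
        ((hasDerivAt_id' w).mul_const _)).const_mul _ |>.congr_deriv (by rw [one_mul])
  have hbound : ∀ x, ∀ w ∈ Metric.ball z₀ (z₀.im / 2),
      ‖h x * (1 / (1 - w * E x) ^ 2 * E x)‖ ≤ M ^ 2 * (‖h x‖ * E x) := by
    intro x w hw
    have := hE0 x
    have hw' := (hball w hw).1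
    rw [norm_mul]
    calc _ ≤ ‖h x‖ * ((‖w‖ / w.im) ^ 2 * E x) := by
          gcongr
          exact norm_one_div_one_sub_mul_sq_mul_le hw' this
      _ ≤ ‖h x‖ * (M ^ 2 * E x) := by gcongr; exact (hball w hw).2
      _ = M ^ 2 * (‖h x‖ * E x) := by ring
  have hint₀ : Integrable (fun x => h x * polyKernel (z₀ * E x)) μ := by
    refine (hint.const_mul (‖z₀‖ / z₀.im * ‖z₀‖)).mono' (hmeas z₀)
      (Eventually.of_forall fun x => ?_)
    have hk := (norm_polyKernel_mul_ofReal_le hz₀ (hE0 x)).trans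
      (mul_le_mul_of_nonneg_left (min_le_right _ _) (by positivity))
    rw [norm_mul]
    calc ‖h x‖ * ‖polyKernel (z₀ * E x)‖ ≤ ‖h x‖ * (‖z₀‖ / z₀.im * (‖z₀‖ * E x)) := by gcongr
      _ = ‖z₀‖ / z₀.im * ‖z₀‖ * (‖h x‖ * E x) := by ring
  have hmeas' : Measurable fun x => 1 / (1 - z₀ * E x) ^ 2 * (E x : ℂ) := by fun_prop
  exact (hasDerivAt_integral_of_dominated_loc_of_deriv_le (Metric.ball_mem_nhds z₀ (by positivity))
    (Eventually.of_forall hmeas) hint₀ (hh.mul hmeas'.aestronglyMeasurable)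
    (Eventually.of_forall hbound) (hint.const_mul _)
    (Eventually.of_forall hderiv)).2.differentiableAt.differentiableWithinAt

lemma norm_div_im_mul_rpow_ofReal_zpow_mul {q : ℝ} (hq : 0 < q) (t : ℂ) (k : ℤ) (θ : ℝ) :
    ‖(q : ℂ) ^ k * t‖ / ((q : ℂ) ^ k * t).im * ‖(q : ℂ) ^ k * t‖ ^ θ =
      ‖t‖ / t.im * ‖t‖ ^ θ * (q ^ θ) ^ k := by
  have hqk : 0 < q ^ k := zpow_pos hq k
  have hpow : (q ^ k) ^ θ = (q ^ θ) ^ k := by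
    rw [← Real.rpow_intCast, ← Real.rpow_mul hq.le, mul_comm, Real.rpow_mul hq.le,
      Real.rpow_intCast]
  rw [← ofReal_zpow, norm_mul, Complex.norm_real, Real.norm_of_nonneg hqk.le, im_ofReal_mul,
    Real.mul_rpow hqk.le (norm_nonneg _), hpow, mul_div_mul_left _ _ hqk.ne']
  ring

lemma summable_zpow_mul_norm_div_im_mul_rpow {q : ℝ} (hq : 0 < q) {a θ : ℝ} (ha : 0 ≤ a)
    (haq : a * q < 1) (hθ : 1 < a * q ^ θ) (t : ℂ) :
    Summable fun k : ℤ => a ^ k * (‖(q : ℂ) ^ k * t‖ / ((q : ℂ) ^ k * t).im *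
      ‖(q : ℂ) ^ k * t‖ ^ (if 0 ≤ k then 1 else θ)) := by
  refine (summable_int_ite_geometric (ρ₁ := a * q) (by positivity) haq hθ
    (‖t‖ / t.im * ‖t‖ ^ (1 : ℝ)) (‖t‖ / t.im * ‖t‖ ^ θ)).congr fun k => ?_
  simp only [norm_div_im_mul_rpow_ofReal_zpow_mul hq]
  split_ifs <;> simp only [Real.rpow_one, mul_zpow] <;> ring

def mplKernel (t : Fin r → ℂ) (j : Fin r) (y : ℝ) : ℂ := polyKernel (t j * Real.exp (-y))

def mplIntegral (nn : Fin r → ℕ) (t : Fin r → ℂ) : ℂ :=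
  (∏ i, ((nn i - 1).factorial : ℂ))⁻¹ * ∫ x, weightedIntegrand nn (mplKernel t) x

lemma measurable_mplKernel (t : Fin r → ℂ) (j : Fin r) : Measurable (mplKernel t j) :=
  measurable_polyKernel.comp (by fun_prop)

lemma mplKernel_update (s : Fin r → ℂ) (i : Fin r) (z : ℂ) :
    mplKernel (Function.update s i z) =
      Function.update (mplKernel s) i fun y => polyKernel (z * Real.exp (-y)) := by
  ext j y
  rcases eq_or_ne j i with rfl | hj
  · simp [mplKernel]
  · simp [mplKernel, hj]

def mplKernelTerm (t : Fin r → ℂ) (a : Fin r → ℕ) (j : Fin r) (y : ℝ) : ℂ :=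
  (t j * Real.exp (-y)) ^ (a j + 1)

lemma weightedIntegrand_mplKernelTerm (nn : Fin r → ℕ) (t : Fin r → ℂ) (a : Fin r → ℕ)
    (x : Fin r → ℝ) :
    weightedIntegrand nn (mplKernelTerm t a) x =
      (∏ j, t j ^ (a j + 1)) * expWeight nn (fun j => a j + 1) x := by
  rw [← weightedIntegrand_const_mul_exp]
  congr 1
  ext j y
  rw [mplKernelTerm, mul_pow, ← ofReal_pow, ← Real.exp_nat_mul]
  push_cast
  ring_nf

lemma hasSum_weightedIntegrand_mplKernelTerm (nn : Fin r → ℕ) {t : Fin r → ℂ}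
    (ht : ∀ j, ‖t j‖ < 1) (x : Fin r → ℝ) :
    HasSum (fun a => weightedIntegrand nn (mplKernelTerm t a) x)
      (weightedIntegrand nn (mplKernel t) x) := by
  by_cases hx : ∀ i, 0 < x i
  · have hz : ∀ j, ‖t j * Real.exp (-tailSum x j)‖ < 1 := fun j => by
      rw [norm_mul, Complex.norm_real, Real.norm_of_nonneg (Real.exp_pos _).le]
      exact mul_lt_one_of_nonneg_of_lt_one_left (norm_nonneg _) (ht j)
        (Real.exp_le_one_iff.2 (neg_nonpos.2 (tailSum_pos hx j).le))
    have := hasSum_pi_prod (fun j (k : ℕ) => (t j * Real.exp (-tailSum x j)) ^ (k + 1))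
      fun j => by simpa only [pow_succ', norm_mul, norm_pow] using
        (summable_geometric_of_lt_one (norm_nonneg _) (hz j)).mul_left _
    simp only [(hasSum_pow_succ_polyKernel (hz _)).tsum_eq] at this
    exact this.mul_left _
  · obtain ⟨i, hi⟩ := not_forall.1 hx
    simp only [weightedIntegrand_of_nonpos nn _ (not_lt.1 hi)]
    exact hasSum_zero

lemma integrable_weightedIntegrand_mplKernelTerm {nn : Fin r → ℕ} (hnn : ∀ i, 1 ≤ nn i)
    (t : Fin r → ℂ) (a : Fin r → ℕ) :
    Integrable (weightedIntegrand nn (mplKernelTerm t a)) := by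
  rw [funext (weightedIntegrand_mplKernelTerm nn t a)]
  exact (integrable_expWeight hnn fun j => by positivity).ofReal.const_mul _

lemma integral_weightedIntegrand_mplKernelTerm {nn : Fin r → ℕ} (hnn : ∀ i, 1 ≤ nn i)
    (t : Fin r → ℂ) (a : Fin r → ℕ) :
    ∫ x, weightedIntegrand nn (mplKernelTerm t a) x = (∏ i, ((nn i - 1).factorial : ℂ)) *
      ((∏ i, t i ^ (a i + 1)) / ∏ i, (∑ j ∈ Iic i, ((a j : ℂ) + 1)) ^ nn i) := by
  simp_rw [weightedIntegrand_mplKernelTerm]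
  rw [integral_const_mul, integral_complex_ofReal,
    integral_expWeight hnn fun j => by positivity]
  push_cast
  rw [prod_div_distrib]
  ring

lemma integral_norm_weightedIntegrand_mplKernelTerm_le {nn : Fin r → ℕ} (hnn : ∀ i, 1 ≤ nn i)
    (t : Fin r → ℂ) (a : Fin r → ℕ) :
    ∫ x, ‖weightedIntegrand nn (mplKernelTerm t a) x‖ ≤
      (∏ i, ((nn i - 1).factorial : ℝ)) * ‖∏ j, t j ^ (a j + 1)‖ := by
  simp only [weightedIntegrand_mplKernelTerm, norm_mul, Complex.norm_real,
    Real.norm_of_nonneg (expWeight_nonneg _ _ _), integral_const_mul,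
    integral_expWeight hnn fun j => (by positivity : (0 : ℝ) < a j + 1)]
  rw [mul_comm]
  gcongr with i
  refine div_le_self (by positivity) (one_le_pow₀ ?_)
  exact (single_le_sum (fun j _ => by positivity) (mem_Iic.2 le_rfl)).trans' (by simp)

lemma mplIntegral_eq_mpl {nn : Fin r → ℕ} (hnn : ∀ i, 1 ≤ nn i) {t : Fin r → ℂ}
    (ht : ∀ j, ‖t j‖ < 1) : mplIntegral nn t = mpl r nn t := by
  have hsum : Summable fun a => ∫ x, ‖weightedIntegrand nn (mplKernelTerm t a) x‖ :=
    .of_nonneg_of_le (fun a => integral_nonneg fun x => norm_nonneg _)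
      (integral_norm_weightedIntegrand_mplKernelTerm_le hnn t)
      ((summable_norm_pi_prod (fun j (k : ℕ) => t j ^ (k + 1)) fun j => by
        simpa only [pow_succ', norm_mul, norm_pow] using
          (summable_geometric_of_lt_one (norm_nonneg _) (ht j)).mul_left ‖t j‖).mul_left _)
  have hseries : ∫ x, weightedIntegrand nn (mplKernel t) x =
      ∑' a, ∫ x, weightedIntegrand nn (mplKernelTerm t a) x := by
    rw [integral_tsum_of_summable_integral_norm
      (integrable_weightedIntegrand_mplKernelTerm hnn t) hsum]
    exact integral_congr_ae (Eventually.of_forall fun x =>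
      (hasSum_weightedIntegrand_mplKernelTerm nn ht x).tsum_eq.symm)
  rw [mplIntegral, hseries, tsum_congr (integral_weightedIntegrand_mplKernelTerm hnn t),
    tsum_mul_left, inv_mul_cancel_left₀
      (prod_ne_zero_iff.2 fun i _ => by exact_mod_cast (nn i - 1).factorial_ne_zero), mpl]

lemma measurable_update_mplKernel (s : Fin r → ℂ) (i : Fin r) {ψ : ℝ → ℂ} (hψ : Measurable ψ)
    (j : Fin r) : Measurable (Function.update (mplKernel s) i ψ j) := by
  rcases eq_or_ne j i with rfl | hj
  · simpa using hψ
  · simpa [hj] using measurable_mplKernel s j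

lemma integrable_norm_weightedIntegrand_update_mul_exp {nn : Fin r → ℕ} (hnn : ∀ i, 1 ≤ nn i)
    {s : Fin r → ℂ} (hs : ∀ j, 0 < (s j).im) (i : Fin r) :
    Integrable fun x =>
      ‖weightedIntegrand nn (Function.update (mplKernel s) i 1) x‖ * Real.exp (-tailSum x i) := by
  have hbound : ∀ j y, 0 < y →
      ‖Function.update (mplKernel s) i (fun y => (Real.exp (-y) : ℂ)) j y‖ ≤
        Function.update (fun j => ‖s j‖ / (s j).im * ‖s j‖ ^ (1 : ℝ)) i 1 j *
          Real.exp (-(1 * y)) := by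
    intro j y _
    rcases eq_or_ne j i with rfl | hj
    · simp only [Function.update_self, one_mul, Complex.norm_real, Real.norm_eq_abs,
        Real.abs_exp, le_refl]
    · rw [Function.update_of_ne hj, Function.update_of_ne hj]
      exact norm_polyKernel_mul_exp_le (hs j) zero_le_one le_rfl y
  refine (integrable_weightedIntegrand hnn (measurable_update_mplKernel s i (by fun_prop)) hbound
    fun _ => one_pos).norm.congr (Eventually.of_forall fun x => ?_)
  dsimp only
  rw [weightedIntegrand_update nn _ i (fun y => (Real.exp (-y) : ℂ)), norm_mul,
    Complex.norm_real, Real.norm_of_nonneg (Real.exp_pos _).le]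

lemma differentiableOn_mplIntegral_update {nn : Fin r → ℕ} (hnn : ∀ i, 1 ≤ nn i)
    {s : Fin r → ℂ} (hs : ∀ j, 0 < (s j).im) (i : Fin r) :
    DifferentiableOn ℂ (fun z => mplIntegral nn (Function.update s i z)) {z | 0 < z.im} := by
  set h := weightedIntegrand nn (Function.update (mplKernel s) i 1)
  have heq : (fun z => mplIntegral nn (Function.update s i z)) = fun z =>
      (∏ i, ((nn i - 1).factorial : ℂ))⁻¹ *
        ∫ x, h x * polyKernel (z * (Real.exp (-tailSum x i) : ℝ)) := by
    ext z
    rw [mplIntegral, mplKernel_update]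
    exact congrArg _ (integral_congr_ae (Eventually.of_forall fun x =>
      weightedIntegrand_update nn _ i _ x))
  have hh : Measurable h :=
    measurable_weightedIntegrand nn (measurable_update_mplKernel s i (ψ := 1) measurable_const)
  rw [heq]
  exact (differentiableOn_integral_mul_polyKernel hh.aestronglyMeasurable
    (continuous_tailSum i).neg.rexp.measurable (fun x => Real.exp_pos _)
    (integrable_norm_weightedIntegrand_update_mul_exp hnn hs i)).const_mul _

lemma norm_mplIntegral_le {nn : Fin r → ℕ} (hnn : ∀ i, 1 ≤ nn i) {s : Fin r → ℂ}
    (hs : ∀ j, 0 < (s j).im) {θ θ₀ : Fin r → ℝ} (hθ₀ : ∀ j, 0 < θ₀ j) (hθ₀θ : ∀ j, θ₀ j ≤ θ j)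
    (hθ1 : ∀ j, θ j ≤ 1) :
    ‖mplIntegral nn s‖ ≤
      (∏ j, ‖s j‖ / (s j).im * ‖s j‖ ^ θ j) * ∏ i, ((∑ j ∈ Iic i, θ₀ j) ^ nn i)⁻¹ := by
  have hbound : ∀ j y, 0 < y → ‖mplKernel s j y‖ ≤
      ‖s j‖ / (s j).im * ‖s j‖ ^ θ j * Real.exp (-(θ₀ j * y)) := fun j y hy => by
    refine (norm_polyKernel_mul_exp_le (hs j) ((hθ₀ j).le.trans (hθ₀θ j)) (hθ1 j) y).trans ?_
    have := (hs j).le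
    gcongr
    exact hθ₀θ j
  rw [mplIntegral, norm_mul, norm_inv, norm_prod]
  simp only [norm_natCast]
  calc _ ≤ (∏ i, ((nn i - 1).factorial : ℝ))⁻¹ * ((∏ j, ‖s j‖ / (s j).im * ‖s j‖ ^ θ j) *
        ∏ i, (nn i - 1).factorial / (∑ j ∈ Iic i, θ₀ j) ^ nn i) := by
          gcongr
          exact norm_integral_weightedIntegrand_le hnn hbound hθ₀
    _ = _ := by
      simp only [div_eq_mul_inv, prod_mul_distrib]
      field_simp

lemma im_ofReal_zpow_mul_pos {q : ℝ} (hq : 0 < q) {t : ℂ} (ht : 0 < t.im) (k : ℤ) :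
    0 < ((q : ℂ) ^ k * t).im := by
  rw [← ofReal_zpow, im_ofReal_mul]
  exact mul_pos (zpow_pos hq _) ht

lemma norm_prod_zpow_mul_mplIntegral_le {q : ℝ} (hq : 0 < q) {nn : Fin r → ℕ}
    (hnn : ∀ i, 1 ≤ nn i) {t : Fin r → ℂ} (ht : ∀ j, 0 < (t j).im) (u : Fin r → ℂ)
    (m : Fin r → ℤ) {θ θ₀ : Fin r → ℝ} (hθ₀ : ∀ j, 0 < θ₀ j) (hθ₀θ : ∀ j, θ₀ j ≤ θ j)
    (hθ1 : ∀ j, θ j ≤ 1) :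
    ‖(∏ j, u j ^ m j) * mplIntegral nn (fun j => (q : ℂ) ^ m j * t j)‖ ≤
      (∏ i, ((∑ j ∈ Iic i, θ₀ j) ^ nn i)⁻¹) * ∏ j, ‖u j‖ ^ m j *
        (‖(q : ℂ) ^ m j * t j‖ / ((q : ℂ) ^ m j * t j).im * ‖(q : ℂ) ^ m j * t j‖ ^ θ j) := by
  rw [norm_mul, norm_prod]
  calc (∏ j, ‖u j ^ m j‖) * ‖mplIntegral nn fun j => (q : ℂ) ^ m j * t j‖
      ≤ (∏ j, ‖u j‖ ^ m j) * ((∏ j, ‖(q : ℂ) ^ m j * t j‖ / ((q : ℂ) ^ m j * t j).im *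
          ‖(q : ℂ) ^ m j * t j‖ ^ θ j) * ∏ i, ((∑ j ∈ Iic i, θ₀ j) ^ nn i)⁻¹) := by
        simp only [norm_zpow]
        gcongr
        exact norm_mplIntegral_le hnn (fun j => im_ofReal_zpow_mul_pos hq (ht j) _) hθ₀ hθ₀θ hθ1
    _ = _ := by
        simp only [prod_mul_distrib]
        ring

lemma upperPoly_eq_pi (r : ℕ) : UpperPoly r = Set.univ.pi fun _ => {z : ℂ | 0 < z.im} := by
  ext t
  simp [UpperPoly]

lemma IsMplBranch.eqOn_mplIntegral {nn : Fin r → ℕ} (hnn : ∀ i, 1 ≤ nn i)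
    {f : (Fin r → ℂ) → ℂ} (hf : IsMplBranch r nn f) :
    Set.EqOn f (mplIntegral nn) (UpperPoly r) := by
  have hH : IsOpen {z : ℂ | 0 < z.im} := isOpen_lt continuous_const continuous_im
  rw [upperPoly_eq_pi]
  refine eqOn_univ_pi_of_differentiableOn_update (fun _ => hH)
    (fun _ => (convex_halfSpace_im_gt 0).isPreconnected)
    (V := fun _ => {z : ℂ | 0 < z.im} ∩ Metric.ball 0 1) (fun _ => hH.inter Metric.isOpen_ball)
    (fun _ => ⟨I / 2, by simp, by simp; norm_num⟩) (fun _ => Set.inter_subset_left) ?_ ?_ ?_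
  · intro s hs i
    refine hf.1.comp (fun z _ => (hasFDerivAt_update s z).differentiableAt.differentiableWithinAt)
      fun z hz => ?_
    rw [upperPoly_eq_pi]
    exact (Set.update_mem_pi_iff_of_mem hs).2 fun _ => hz
  · exact fun s hs i => differentiableOn_mplIntegral_update hnn (Set.mem_univ_pi.1 hs) i
  · intro s hs
    have hs' := Set.mem_univ_pi.1 hs
    rw [hf.2 s (fun j => (hs' j).1) fun j => by simpa using (hs' j).2, mplIntegral_eq_mpl hnn]
    exact fun j => by simpa using (hs' j).2

end MultiplePolylog

end

open MultiplePolylog Finset in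
theorem stmt_11_general (q : ℝ) (hq0 : 0 < q) (r : ℕ)
    (nn : Fin r → ℕ) (hnn : ∀ i, 1 ≤ nn i)
    (f : (Fin r → ℂ) → ℂ) (hf : IsMplBranch r nn f)
    (t : Fin r → ℂ) (ht : ∀ i, 0 < (t i).im)
    (u : Fin r → ℂ) (hu1 : ∀ i, 1 < ‖u i‖) (hu2 : ∀ i, ‖u i‖ < q⁻¹) :
    Summable (fun m : Fin r → ℤ =>
      ‖(∏ i, u i ^ m i) * f (fun i => (q : ℂ) ^ m i * t i)‖) := by
  choose θ hθ0 hθ1 hθu using fun j => exists_rpow_mul_gt_one hq0 (hu1 j)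
  -- exponent `1` where `m j ≥ 0` (decay from `‖u j‖ q < 1`) and `θ j` where `m j < 0`
  -- (decay from `‖u j‖ q ^ θ j > 1`)
  set θ' : Fin r → ℤ → ℝ := fun j k => if 0 ≤ k then 1 else θ j
  have hθ' : ∀ j k, θ j ≤ θ' j k ∧ θ' j k ≤ 1 := fun j k => by
    simp only [θ']; split_ifs <;> simp [hθ1 j]
  set g : Fin r → ℤ → ℝ := fun j k => ‖u j‖ ^ k * (‖(q : ℂ) ^ k * t j‖ / ((q : ℂ) ^ k * t j).im *
      ‖(q : ℂ) ^ k * t j‖ ^ θ' j k)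
  have hg : ∀ j, Summable fun k => ‖g j k‖ := fun j =>
    (summable_zpow_mul_norm_div_im_mul_rpow hq0 (norm_nonneg _)
      ((mul_lt_mul_of_pos_right (hu2 j) hq0).trans_eq (inv_mul_cancel₀ hq0.ne')) (hθu j) (t j)).norm
  refine .of_nonneg_of_le (fun _ => norm_nonneg _) (fun m => ?_)
    ((summable_norm_pi_prod g hg).of_norm.mul_left (∏ i, ((∑ j ∈ Iic i, θ j) ^ nn i)⁻¹))
  rw [hf.eqOn_mplIntegral hnn fun j => im_ofReal_zpow_mul_pos hq0 (ht j) (m j)]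
  exact norm_prod_zpow_mul_mplIntegral_le hq0 hnn ht u m hθ0 (fun j => (hθ' j _).1)
    fun j => (hθ' j _).2

theorem stmt_11 (q : ℝ) (hq0 : 0 < q) (hq1 : q < 1) (r : ℕ) (hr : 1 ≤ r)
    (nn : Fin r → ℕ) (hnn : ∀ i, 1 ≤ nn i)
    (f : (Fin r → ℂ) → ℂ) (hf : IsMplBranch r nn f)
    (t : Fin r → ℂ) (ht : ∀ i, 0 < (t i).im)
    (htq : ∀ i, q < ‖t i‖) (ht1 : ∀ i, ‖t i‖ < 1)
    (hmono : ∀ i j : Fin r, i < j → ‖t i‖ < ‖t j‖)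
    (hray : ∀ i j : Fin r, i ≠ j → ∀ x : ℝ, 0 < x → t i / t j ≠ (x : ℂ))
    (u : Fin r → ℂ) (hu1 : ∀ i, 1 < ‖u i‖) (hu2 : ∀ i, ‖u i‖ < q⁻¹) :
    Summable (fun m : Fin r → ℤ =>
      ‖(∏ i, u i ^ m i) * f (fun i => (q : ℂ) ^ m i * t i)‖) :=
  stmt_11_general q hq0 r nn hnn f hf t ht u hu1 hu2
end

section
/- Let m ≥ 1 and let x₁,…,x_m ∈ ℂ be such that every consecutive sum x_j + x_{j+1} + ⋯ + x_k (for 1 ≤ j ≤ k ≤ m) is nonzero. Then ∑_{p=0}^{m} (−1)^p · ( ∏_{j=1}^{p} (x_j + x_{j+1} + ⋯ + x_p) )^{−1} · ( ∏_{j=p+1}^{m} (x_{p+1} + x_{p+2} + ⋯ + x_j) )^{−1} = 0, where empty products equal 1. -/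
/-!
With the prefix sums `t p = x 0 + ⋯ + x (p - 1)`, every consecutive sum is a difference
`t k - t j`, so the hypothesis says that the nodes `t 0, …, t m` are distinct, and the `p`-th term
of the sum is `(-1) ^ m / ∏_{j ≠ p} (t p - t j)`. Summed over `m + 1 ≥ 2` distinct nodes these
barycentric weights give the coefficient of `X ^ m` in the Lagrange interpolant of the constant
polynomial `1`, which is zero.
-/

open Finset Polynomial Lagrange

theorem Lagrange.sum_nodalWeight_eq_zero {F ι : Type*} [Field F] [DecidableEq ι] {s : Finset ι}
    {v : ι → F} (hvs : Set.InjOn v s) (hs : 2 ≤ #s) : ∑ i ∈ s, nodalWeight s v i = 0 := by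
  have h := coeff_eq_sum hvs (P := 1) (by rw [degree_one]; exact_mod_cast (by omega : 0 < #s))
  rw [coeff_one, if_neg (by omega)] at h
  simpa only [nodalWeight, prod_inv_distrib, eval_one, one_div] using h.symm

theorem Lagrange.neg_one_pow_mul_nodalWeight_range {F : Type*} [Field F] (v : ℕ → F) {m p : ℕ}
    (hp : p ≤ m) :
    (-1) ^ m * nodalWeight (range (m + 1)) v p
      = (-1) ^ p * (∏ j ∈ range p, (v p - v j))⁻¹ *
          (∏ j ∈ Ico p m, (v (j + 1) - v p))⁻¹ := by
  have hsplit : (range (m + 1)).erase p = range p ∪ Ico (p + 1) (m + 1) := by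
    ext j
    simp only [mem_erase, mem_range, mem_union, mem_Ico]
    omega
  have hdisj : Disjoint (range p) (Ico (p + 1) (m + 1)) :=
    disjoint_left.2 fun j hj hj' => by simp only [mem_range, mem_Ico] at hj hj'; omega
  have hsign : ∏ j ∈ Ico p m, (v (j + 1) - v p)
      = (-1) ^ (m - p) * ∏ j ∈ Ico (p + 1) (m + 1), (v p - v j) := by
    rw [← prod_Ico_add' (fun j => v p - v j) p m 1, ← Nat.card_Ico p m, ← prod_neg]
    simp only [neg_sub]
  rw [nodalWeight, hsplit, prod_union hdisj, prod_inv_distrib, prod_inv_distrib, hsign, mul_inv,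
    ← inv_pow, inv_neg_one, ← Nat.add_sub_cancel' hp, pow_add, Nat.add_sub_cancel_left]
  ring

theorem Finset.injOn_sum_range_of_sum_Icc_ne_zero {M : Type*} [AddCommGroup M] {m : ℕ}
    {x : ℕ → M} (hx : ∀ j k : ℕ, j ≤ k → k < m → ∑ i ∈ Icc j k, x i ≠ 0) :
    Set.InjOn (fun p => ∑ i ∈ range p, x i) (range (m + 1)) := by
  have hlt : ∀ j k, j < k → k ≤ m → ∑ i ∈ range k, x i ≠ ∑ i ∈ range j, x i := by
    intro j k hjk hkm h
    refine hx j (k - 1) (by omega) (by omega) ?_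
    rw [← Ico_add_one_right_eq_Icc, Nat.sub_add_cancel (by omega), sum_Ico_eq_sub x hjk.le, h,
      sub_self]
  intro j hj k hk h
  simp only [coe_range, Set.mem_Iio] at hj hk
  rcases lt_trichotomy j k with hjk | rfl | hjk
  · exact absurd h.symm (hlt j k hjk (by omega))
  · rfl
  · exact absurd h (hlt k j hjk (by omega))

/-- The partial-fraction identity
`∑_{p=0}^{m} (−1)^p · (∏_{j=1}^{p} (x_j+⋯+x_p))⁻¹ · (∏_{j=p+1}^{m} (x_{p+1}+⋯+x_j))⁻¹ = 0`
(0-based indexing: `x 0, …, x (m-1)`), valid when all consecutive sums are nonzero. -/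
theorem stmt_17 (m : ℕ) (hm : 1 ≤ m) (x : ℕ → ℂ)
    (hx : ∀ j k : ℕ, j ≤ k → k < m → ∑ i ∈ Finset.Icc j k, x i ≠ 0) :
    ∑ p ∈ Finset.range (m + 1),
      (-1 : ℂ) ^ p * (∏ j ∈ Finset.range p, ∑ i ∈ Finset.Ico j p, x i)⁻¹ *
        (∏ j ∈ Finset.Ico p m, ∑ i ∈ Finset.Icc p j, x i)⁻¹ = 0 := by
  set t : ℕ → ℂ := fun p => ∑ i ∈ range p, x i
  have hIco : ∀ j p, j ≤ p → ∑ i ∈ Ico j p, x i = t p - t j :=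
    fun j p h => sum_Ico_eq_sub x h
  calc _ = ∑ p ∈ range (m + 1), (-1 : ℂ) ^ m * nodalWeight (range (m + 1)) t p := by
        refine sum_congr rfl fun p hp => ?_
        have hleft : ∏ j ∈ range p, ∑ i ∈ Ico j p, x i = ∏ j ∈ range p, (t p - t j) :=
          Finset.prod_congr rfl fun j hj => hIco j p (mem_range.1 hj).le
        have hright :
            ∏ j ∈ Ico p m, ∑ i ∈ Icc p j, x i = ∏ j ∈ Ico p m, (t (j + 1) - t p) :=
          Finset.prod_congr rfl fun j hj => by
            rw [← Ico_add_one_right_eq_Icc, hIco p (j + 1) (by rw [mem_Ico] at hj; omega)]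
        rw [hleft, hright,
          neg_one_pow_mul_nodalWeight_range t (Nat.lt_succ_iff.1 (mem_range.1 hp))]
    _ = 0 := by
        rw [← mul_sum, sum_nodalWeight_eq_zero (injOn_sum_range_of_sum_Icc_ne_zero hx)
          (by rw [card_range]; omega), mul_zero]
end

section
/- Let V = V_B ⊕ V_F and let R = R_B ⊕ R_F ⊆ ⋀²V be a subspace with R_B ⊆ ⋀²V_B and R_F ⊆ (V_B⊗V_F) ⊕ ⋀²V_F. Assume: (1) the restriction of π_F to R_F is a linear isomorphism R_F ≅ ⋀²V_F; define α : ⋀²V_F → V_B⊗V_F by α(w) = −π_mix( (π_F|_{R_F})^{−1}(w) ), and let ᾱ : V_F⊗V_F → V_B⊗V_F be α precomposed with the canonical surjection V_F⊗V_F → ⋀²V_F. (2) The two maps α₃⁽¹⁾, α₃⁽²⁾ : V_F^{⊗3} → ⋀²V_B ⊗ V_F, defined by α₃⁽¹⁾ = (∧_B ⊗ id_{V_F}) ∘ (id_{V_B} ⊗ ᾱ) ∘ (ᾱ ⊗ id_{V_F}) and α₃⁽²⁾ = (∧_B ⊗ id_{V_F}) ∘ (id_{V_B} ⊗ ᾱ)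 ∘ (s ⊗ id_{V_F}) ∘ (id_{V_F} ⊗ ᾱ), where ∧_B : V_B⊗V_B → ⋀²V_B is the wedge map and s : V_F⊗V_B → V_B⊗V_F the swap, satisfy: the image of α₃⁽¹⁾ − α₃⁽²⁾ is contained in the image of R_B ⊗ V_F in ⋀²V_B ⊗ V_F. Set Y = ⋀V/⟨R⟩ and Y_B = ⋀V_B/⟨R_B⟩. Then the k-algebra homomorphism Y_B → Y induced by the inclusion V_B ↪ V is injective, and the Y_B-linear map Y_B ⊕ (Y_B ⊗_k V_F) → Y sending (y, y′⊗f) to (image of y) + (image of y′)·(image of f) is a bijection; in particular Y is a free Y_B-module. -/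
open scoped TensorProduct

section QuadraticFibration

variable (k : Type*) [Field k] [CharZero k]
  (VB VF : Type*) [AddCommGroup VB] [Module k VB] [AddCommGroup VF] [Module k VF]

/-- The inclusion `⋀V_B → ⋀V` induced by `V_B ↪ V = V_B ⊕ V_F`. -/
noncomputable def incB : ExteriorAlgebra k VB →ₐ[k] ExteriorAlgebra k (VB × VF) :=
  ExteriorAlgebra.map (LinearMap.inl k VB VF)

/-- The inclusion `⋀V_F → ⋀V` induced by `V_F ↪ V = V_B ⊕ V_F`. -/
noncomputable def incF : ExteriorAlgebra k VF →ₐ[k] ExteriorAlgebra k (VB × VF) :=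
  ExteriorAlgebra.map (LinearMap.inr k VB VF)

/-- The projection `⋀V → ⋀V_F` induced by `V = V_B ⊕ V_F → V_F`; on the
degree-2 part it is the projection `π_F : ⋀²V → ⋀²V_F`. -/
noncomputable def projF : ExteriorAlgebra k (VB × VF) →ₐ[k] ExteriorAlgebra k VF :=
  ExteriorAlgebra.map (LinearMap.snd k VB VF)

/-- The injective map `V_B ⊗ V_F → ⋀²V ⊆ ⋀V`, `b ⊗ f ↦ b ∧ f`, identifying
`V_B ⊗ V_F` with the summand `V_B ∧ V_F` of `⋀²V`. -/
noncomputable def mixMap : VB ⊗[k] VF →ₗ[k] ExteriorAlgebra k (VB × VF) :=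
  TensorProduct.lift ((LinearMap.mul k (ExteriorAlgebra k (VB × VF))).compl₁₂
    ((ExteriorAlgebra.ι k).comp (LinearMap.inl k VB VF))
    ((ExteriorAlgebra.ι k).comp (LinearMap.inr k VB VF)))

/-- The wedge map `∧_B : V_B ⊗ V_B → ⋀²V_B ⊆ ⋀V_B`. -/
noncomputable def wedgeB : VB ⊗[k] VB →ₗ[k] ExteriorAlgebra k VB :=
  TensorProduct.lift ((LinearMap.mul k (ExteriorAlgebra k VB)).compl₁₂
    (ExteriorAlgebra.ι k) (ExteriorAlgebra.ι k))

/-- The canonical surjection `V_F ⊗ V_F → ⋀²V_F ⊆ ⋀V_F`. -/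
noncomputable def wedgeF : VF ⊗[k] VF →ₗ[k] ExteriorAlgebra k VF :=
  TensorProduct.lift ((LinearMap.mul k (ExteriorAlgebra k VF)).compl₁₂
    (ExteriorAlgebra.ι k) (ExteriorAlgebra.ι k))

/-- `α₃⁽¹⁾ = (∧_B ⊗ id) ∘ (id_B ⊗ ᾱ) ∘ (ᾱ ⊗ id)` on `V_F^{⊗3}`, with values in
`⋀²V_B ⊗ V_F ⊆ ⋀V_B ⊗ V_F`. -/
noncomputable def alpha31 (abar : VF ⊗[k] VF →ₗ[k] VB ⊗[k] VF) :
    (VF ⊗[k] VF) ⊗[k] VF →ₗ[k] ExteriorAlgebra k VB ⊗[k] VF :=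
  TensorProduct.map (wedgeB k VB) LinearMap.id ∘ₗ
  (TensorProduct.assoc k VB VB VF).symm.toLinearMap ∘ₗ
  TensorProduct.map LinearMap.id abar ∘ₗ
  (TensorProduct.assoc k VB VF VF).toLinearMap ∘ₗ
  TensorProduct.map abar LinearMap.id

/-- `α₃⁽²⁾ = (∧_B ⊗ id) ∘ (id_B ⊗ ᾱ) ∘ (s ⊗ id) ∘ (id_F ⊗ ᾱ)` on `V_F^{⊗3}`. -/
noncomputable def alpha32 (abar : VF ⊗[k] VF →ₗ[k] VB ⊗[k] VF) :
    (VF ⊗[k] VF) ⊗[k] VF →ₗ[k] ExteriorAlgebra k VB ⊗[k] VF :=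
  TensorProduct.map (wedgeB k VB) LinearMap.id ∘ₗ
  (TensorProduct.assoc k VB VB VF).symm.toLinearMap ∘ₗ
  TensorProduct.map LinearMap.id abar ∘ₗ
  (TensorProduct.assoc k VB VF VF).toLinearMap ∘ₗ
  TensorProduct.map (TensorProduct.comm k VF VB).toLinearMap LinearMap.id ∘ₗ
  (TensorProduct.assoc k VF VB VF).symm.toLinearMap ∘ₗ
  TensorProduct.map LinearMap.id abar ∘ₗ
  (TensorProduct.assoc k VF VF VF).toLinearMap

end QuadraticFibration

/-!
Put `M = Y_B ⊕ (Y_B ⊗ V_F)`, thought of as the elements `y + y' h` of `Y`. Right multiplication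
by `v = b + f ∈ V` is written down on `M` directly: `b` multiplies `Y_B` on the right and, after
moving past `h` with a sign, also `y' ⊗ h`; `f` sends `y` to `y ⊗ f` and `y' ⊗ h` to
`y' ᾱ(h ⊗ f)`, read in `Y_B ⊗ V_F`. These endomorphisms square to zero: for the `f`-part twice this
is `α₃⁽¹⁾ ≡ 0` modulo `R_B ⊗ V_F`, which follows from (2) because `α₃⁽²⁾` is `-α₃⁽¹⁾` precomposed
with a cyclic rotation, and a trilinear map anti-invariant under a rotation of order three vanishes
when `2` is invertible. So `⋀V` acts on `M` from the right. The action kills `R_B`, and it kills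
`R_F`, whose elements are `w - α(w)` by (1), because `α₃⁽²⁾ ≡ 0` as well; so `Y` acts on `M`. The map
`M → Y` of the theorem intertwines this action with right multiplication in `Y`, hence
`z ↦ (1, 0) · z` is its inverse.
-/

open TensorProduct

namespace QuadraticFibration

section QuotBy

variable {R A B : Type*} [CommSemiring R] [Semiring A] [Algebra R A] [Semiring B] [Algebra R B]
  (S : Submodule R A)

/-- `A ⧸ ⟨S⟩`, the quotient of `A` by the two-sided ideal generated by `S`. -/
abbrev QuotBy : Type _ := RingQuot (fun a b : A => b = 0 ∧ a ∈ S)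

noncomputable abbrev QuotBy.mk : A →ₐ[R] QuotBy S := RingQuot.mkAlgHom R _

lemma QuotBy.mk_eq_zero {x : A} (hx : x ∈ S) : QuotBy.mk S x = 0 := by
  simpa using RingQuot.mkAlgHom_rel R (s := fun a b : A => b = 0 ∧ a ∈ S) ⟨rfl, hx⟩

lemma QuotBy.mk_surjective : Function.Surjective (QuotBy.mk S) :=
  RingQuot.mkAlgHom_surjective R _

variable {S}

noncomputable def QuotBy.lift (f : A →ₐ[R] B) (hf : ∀ x ∈ S, f x = 0) : QuotBy S →ₐ[R] B :=
  RingQuot.liftAlgHom R ⟨f, by rintro x _ ⟨rfl, hx⟩; rw [hf x hx, map_zero]⟩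

@[simp] lemma QuotBy.lift_mk (f : A →ₐ[R] B) (hf : ∀ x ∈ S, f x = 0) (x : A) :
    QuotBy.lift f hf (QuotBy.mk S x) = f x :=
  RingQuot.liftAlgHom_mkAlgHom_apply R f _ x

lemma QuotBy.lift_comp_mk (f : A →ₐ[R] B) (hf : ∀ x ∈ S, f x = 0) :
    (QuotBy.lift f hf).comp (QuotBy.mk S) = f :=
  AlgHom.ext (QuotBy.lift_mk f hf)

end QuotBy

lemma apply_tmul_eq_neg_apply_tmul {R M N : Type*} [CommRing R] [AddCommGroup M] [Module R M]
    [AddCommGroup N] [Module R N] (F : M ⊗[R] M →ₗ[R] N) (hF : ∀ m, F (m ⊗ₜ m) = 0) (a b : M) :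
    F (a ⊗ₜ b) = -F (b ⊗ₜ a) := by
  have h := hF (a + b)
  rw [add_tmul, tmul_add, tmul_add, map_add, map_add, map_add, hF a, hF b, zero_add,
    add_zero] at h
  exact eq_neg_of_add_eq_zero_left h

/-- Three rotations compose to the identity, so `F = -F`. -/
lemma eq_zero_of_apply_eq_neg_rotate {k V W : Type*} [Field k] [NeZero (2 : k)] [AddCommGroup V]
    [Module k V] [AddCommGroup W] [Module k W] (F : (V ⊗[k] V) ⊗[k] V →ₗ[k] W)
    (hF : ∀ a b c, F ((a ⊗ₜ b) ⊗ₜ c) = -F ((b ⊗ₜ c) ⊗ₜ a)) : F = 0 := by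
  refine TensorProduct.ext_threefold fun a b c => ?_
  have h := hF a b c
  rw [hF b c a, hF c a b, neg_neg] at h
  have h2 : (2 : k) • F ((a ⊗ₜ b) ⊗ₜ c) = 0 := by
    rw [two_smul]
    nth_rewrite 2 [h]
    exact add_neg_cancel _
  simpa [two_ne_zero] using h2

lemma map_ι_mul_map_ι_eq_neg {k M A : Type*} [CommRing k] [AddCommGroup M] [Module k M] [Ring A]
    [Algebra k A] (g : ExteriorAlgebra k M →ₐ[k] A) (a b : M) :
    g (ExteriorAlgebra.ι k a) * g (ExteriorAlgebra.ι k b) =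
      -(g (ExteriorAlgebra.ι k b) * g (ExteriorAlgebra.ι k a)) := by
  refine eq_neg_of_add_eq_zero_left ?_
  rw [← map_mul g, ← map_mul g, ← map_add g, ExteriorAlgebra.ι_add_mul_swap, map_zero]

variable {k : Type*} [Field k]
  {VB VF : Type*} [AddCommGroup VB] [Module k VB] [AddCommGroup VF] [Module k VF]

section Decomposition

@[simp] lemma incB_ι (b : VB) :
    incB k VB VF (ExteriorAlgebra.ι k b) = ExteriorAlgebra.ι k (b, (0 : VF)) := by
  simp [incB]

@[simp] lemma incF_ι (f : VF) :
    incF k VB VF (ExteriorAlgebra.ι k f) = ExteriorAlgebra.ι k ((0 : VB), f) := by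
  simp [incF]

@[simp] lemma projF_ι (v : VB × VF) :
    projF k VB VF (ExteriorAlgebra.ι k v) = ExteriorAlgebra.ι k v.2 := by
  simp [projF]

@[simp] lemma mixMap_tmul (b : VB) (f : VF) :
    mixMap k VB VF (b ⊗ₜ f) = ExteriorAlgebra.ι k (b, (0 : VF)) * ExteriorAlgebra.ι k (0, f) := by
  simp [mixMap]

@[simp] lemma wedgeB_tmul (a b : VB) :
    wedgeB k VB (a ⊗ₜ b) = ExteriorAlgebra.ι k a * ExteriorAlgebra.ι k b := by
  simp [wedgeB]

@[simp] lemma wedgeF_tmul (g f : VF) :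
    wedgeF k VF (g ⊗ₜ f) = ExteriorAlgebra.ι k g * ExteriorAlgebra.ι k f := by
  simp [wedgeF]

lemma projF_comp_mixMap : (projF k VB VF).toLinearMap ∘ₗ mixMap k VB VF = 0 := by
  ext b f
  simp

lemma projF_mem_sq {x : ExteriorAlgebra k (VB × VF)}
    (hx : x ∈ LinearMap.range (mixMap k VB VF) ⊔
      LinearMap.range ((ExteriorAlgebra.ι k).comp (LinearMap.inr k VB VF)) ^ 2) :
    projF k VB VF x ∈ LinearMap.range (ExteriorAlgebra.ι k (M := VF)) ^ 2 := by
  have hmap := Submodule.mem_map_of_mem (f := (projF k VB VF).toLinearMap) hx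
  rwa [Submodule.map_sup, Submodule.map_pow, ← LinearMap.range_comp, ← LinearMap.range_comp,
    projF_comp_mixMap, LinearMap.range_zero, bot_sup_eq,
    show (projF k VB VF).toLinearMap ∘ₗ (ExteriorAlgebra.ι k).comp (LinearMap.inr k VB VF) =
      ExteriorAlgebra.ι k by ext; simp] at hmap

lemma ι_mul_ι_mem_sq {M : Type*} [AddCommGroup M] [Module k M] (a b : M) :
    ExteriorAlgebra.ι k a * ExteriorAlgebra.ι k b ∈
      LinearMap.range (ExteriorAlgebra.ι k (M := M)) ^ 2 := by
  rw [pow_two]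
  exact Submodule.mul_mem_mul (LinearMap.mem_range_self _ a) (LinearMap.mem_range_self _ b)

lemma comp_wedgeF_tmul_self (αmap : ExteriorAlgebra k VF →ₗ[k] VB ⊗[k] VF) (f : VF) :
    (αmap ∘ₗ wedgeF k VF) (f ⊗ₜ f) = 0 := by
  simp

end Decomposition

section FiberModule

variable (RB : Submodule k (ExteriorAlgebra k VB)) (abar : VF ⊗[k] VF →ₗ[k] VB ⊗[k] VF)

lemma alpha32_tmul_tmul_eq_neg_alpha31 (hanti : ∀ f, abar (f ⊗ₜ f) = 0) (h g f : VF) :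
    alpha32 k VB VF abar ((h ⊗ₜ g) ⊗ₜ f) = -alpha31 k VB VF abar ((g ⊗ₜ f) ⊗ₜ h) := by
  simp only [alpha31, alpha32, LinearMap.comp_apply, LinearEquiv.coe_coe, assoc_tmul, map_tmul,
    LinearMap.id_apply]
  induction abar (g ⊗ₜ f) using TensorProduct.induction_on with
  | zero => simp
  | tmul c k' => simp [apply_tmul_eq_neg_apply_tmul abar hanti h k', tmul_neg]
  | add u v hu hv => simp only [tmul_add, add_tmul, map_add, hu, hv, neg_add]

noncomputable def ιB : VB →ₗ[k] QuotBy RB := (QuotBy.mk RB).toLinearMap ∘ₗ ExteriorAlgebra.ι k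

@[simp] lemma ιB_apply (b : VB) : ιB RB b = QuotBy.mk RB (ExteriorAlgebra.ι k b) := rfl

lemma rTensor_mk_eq_zero_of_mem {x : ExteriorAlgebra k VB ⊗[k] VF}
    (hx : x ∈ LinearMap.range (TensorProduct.map RB.subtype (LinearMap.id (R := k) (M := VF)))) :
    (QuotBy.mk RB).toLinearMap.rTensor VF x = 0 := by
  obtain ⟨y, rfl⟩ := hx
  have hRB : (QuotBy.mk RB).toLinearMap ∘ₗ RB.subtype = 0 :=
    LinearMap.ext fun r => QuotBy.mk_eq_zero RB r.2
  rw [← LinearMap.comp_apply, LinearMap.rTensor_comp_map, hRB, TensorProduct.map_zero_left,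
    LinearMap.zero_apply]

lemma rTensor_mk_comp_alpha31_eq_zero [NeZero (2 : k)] (hanti : ∀ f, abar (f ⊗ₜ f) = 0)
    (h2 : LinearMap.range (alpha31 k VB VF abar - alpha32 k VB VF abar) ≤
      LinearMap.range (TensorProduct.map RB.subtype (LinearMap.id (R := k) (M := VF)))) :
    (QuotBy.mk RB).toLinearMap.rTensor VF ∘ₗ alpha31 k VB VF abar = 0 := by
  refine eq_zero_of_apply_eq_neg_rotate _ fun h g f => ?_
  have hsub := rTensor_mk_eq_zero_of_mem RB (h2 ⟨(h ⊗ₜ g) ⊗ₜ f, rfl⟩)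
  rw [LinearMap.sub_apply, map_sub, sub_eq_zero, alpha32_tmul_tmul_eq_neg_alpha31 abar hanti,
    map_neg] at hsub
  exact hsub

noncomputable def mulRightB : VB →ₗ[k] Module.End k (QuotBy RB ⊗[k] VF) :=
  LinearMap.rTensorHom VF ∘ₗ (LinearMap.mul k (QuotBy RB)).flip ∘ₗ ιB RB

@[simp] lemma mulRightB_tmul (b : VB) (y : QuotBy RB) (h : VF) :
    mulRightB RB b (y ⊗ₜ h) = (y * QuotBy.mk RB (ExteriorAlgebra.ι k b)) ⊗ₜ h := by
  simp [mulRightB]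

noncomputable def mulRightF : VF →ₗ[k] Module.End k (QuotBy RB ⊗[k] VF) :=
  (TensorProduct.curry (TensorProduct.lift
    ((Algebra.lsmul k k (QuotBy RB ⊗[k] VF)).toLinearMap.compl₂ ((ιB RB).rTensor VF ∘ₗ abar)) ∘ₗ
      (TensorProduct.assoc k (QuotBy RB) VF VF).toLinearMap)).flip

@[simp] lemma mulRightF_tmul (f : VF) (y : QuotBy RB) (h : VF) :
    mulRightF RB abar f (y ⊗ₜ h) = y • (ιB RB).rTensor VF (abar (h ⊗ₜ f)) := by
  simp [mulRightF]

noncomputable def mulRightMix : VB ⊗[k] VF →ₗ[k] Module.End k (QuotBy RB ⊗[k] VF) :=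
  TensorProduct.lift ((LinearMap.mul k _).flip.compl₁₂ (mulRightB RB) (mulRightF RB abar))

@[simp] lemma mulRightMix_tmul (b : VB) (f : VF) :
    mulRightMix RB abar (b ⊗ₜ f) = mulRightF RB abar f * mulRightB RB b := by
  simp [mulRightMix]

lemma mulRightB_smul (b : VB) (y : QuotBy RB) (t : QuotBy RB ⊗[k] VF) :
    mulRightB RB b (y • t) = y • mulRightB RB b t := by
  induction t using TensorProduct.induction_on with
  | zero => simp
  | tmul y' h => simp [smul_tmul', mul_assoc]
  | add t t' ht ht' => simp only [smul_add, map_add, ht, ht']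

lemma mulRightF_smul (f : VF) (y : QuotBy RB) (t : QuotBy RB ⊗[k] VF) :
    mulRightF RB abar f (y • t) = y • mulRightF RB abar f t := by
  induction t using TensorProduct.induction_on with
  | zero => simp
  | tmul y' h => simp [smul_tmul', mul_smul]
  | add t t' ht ht' => simp only [smul_add, map_add, ht, ht']

lemma mulRightB_mulRightB (a b : VB) (t : QuotBy RB ⊗[k] VF) :
    mulRightB RB b (mulRightB RB a t) = ((LinearMap.mul k _).flip
      (QuotBy.mk RB (ExteriorAlgebra.ι k a * ExteriorAlgebra.ι k b))).rTensor VF t := by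
  induction t using TensorProduct.induction_on with
  | zero => simp
  | tmul y h => simp [mul_assoc]
  | add t t' ht ht' => simp only [map_add, ht, ht']

lemma mulRightB_smul_rTensor_ιB (b : VB) (y : QuotBy RB) (u : VB ⊗[k] VF) :
    mulRightB RB b (y • (ιB RB).rTensor VF u) =
      -((y * QuotBy.mk RB (ExteriorAlgebra.ι k b)) • (ιB RB).rTensor VF u) := by
  induction u using TensorProduct.induction_on with
  | zero => simp
  | tmul c f =>
    simp [smul_tmul', mul_assoc, map_ι_mul_map_ι_eq_neg (QuotBy.mk RB) c b, neg_tmul]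
  | add u u' hu hu' => simp only [map_add, smul_add, hu, hu', neg_add]

lemma mulRightB_mulRightF (b : VB) (f : VF) (t : QuotBy RB ⊗[k] VF) :
    mulRightB RB b (mulRightF RB abar f t) = -mulRightF RB abar f (mulRightB RB b t) := by
  induction t using TensorProduct.induction_on with
  | zero => simp
  | tmul y h => simp [mulRightB_smul_rTensor_ιB]
  | add t t' ht ht' => simp only [map_add, ht, ht', neg_add]

lemma mk_ι_smul_rTensor_ιB (c : VB) (u : VB ⊗[k] VF) :
    QuotBy.mk RB (ExteriorAlgebra.ι k c) • (ιB RB).rTensor VF u =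
      (QuotBy.mk RB).toLinearMap.rTensor VF
        (TensorProduct.map (wedgeB k VB) LinearMap.id
          ((TensorProduct.assoc k VB VB VF).symm (c ⊗ₜ u))) := by
  induction u using TensorProduct.induction_on with
  | zero => simp
  | tmul c' f => simp [smul_tmul']
  | add u u' hu hu' => simp only [smul_add, tmul_add, map_add, hu, hu']

lemma mulRightF_mulRightF_tmul (f g : VF) (y : QuotBy RB) (h : VF) :
    mulRightF RB abar f (mulRightF RB abar g (y ⊗ₜ h)) =
      y • (QuotBy.mk RB).toLinearMap.rTensor VF (alpha31 k VB VF abar ((h ⊗ₜ g) ⊗ₜ f)) := by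
  rw [mulRightF_tmul, mulRightF_smul]
  congr 1
  simp only [alpha31, LinearMap.comp_apply, LinearEquiv.coe_coe, map_tmul, LinearMap.id_apply]
  induction abar (h ⊗ₜ g) using TensorProduct.induction_on with
  | zero => simp
  | tmul c k' => simp [mk_ι_smul_rTensor_ιB]
  | add u v hu hv => simp only [map_add, add_tmul, hu, hv]

lemma mulRightMix_abar_tmul (g f : VF) (y : QuotBy RB) (h : VF) :
    mulRightMix RB abar (abar (g ⊗ₜ f)) (y ⊗ₜ h) =
      y • (QuotBy.mk RB).toLinearMap.rTensor VF (alpha32 k VB VF abar ((h ⊗ₜ g) ⊗ₜ f)) := by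
  simp only [alpha32, LinearMap.comp_apply, LinearEquiv.coe_coe, assoc_tmul, map_tmul,
    LinearMap.id_apply]
  induction abar (g ⊗ₜ f) using TensorProduct.induction_on with
  | zero => simp
  | tmul c k' => simp [mk_ι_smul_rTensor_ιB, mul_smul]
  | add u v hu hv => simp only [map_add, LinearMap.add_apply, tmul_add, smul_add, hu, hv]

lemma mulRightF_mulRightF
    (h31 : (QuotBy.mk RB).toLinearMap.rTensor VF ∘ₗ alpha31 k VB VF abar = 0)
    (f g : VF) (t : QuotBy RB ⊗[k] VF) : mulRightF RB abar f (mulRightF RB abar g t) = 0 := by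
  induction t using TensorProduct.induction_on with
  | zero => simp
  | tmul y h =>
    rw [mulRightF_mulRightF_tmul, ← LinearMap.comp_apply, h31, LinearMap.zero_apply, smul_zero]
  | add t t' ht ht' => simp only [map_add, ht, ht', add_zero]

lemma mulRightMix_abar_eq_zero (hanti : ∀ f, abar (f ⊗ₜ f) = 0)
    (h31 : (QuotBy.mk RB).toLinearMap.rTensor VF ∘ₗ alpha31 k VB VF abar = 0)
    (g f : VF) (t : QuotBy RB ⊗[k] VF) : mulRightMix RB abar (abar (g ⊗ₜ f)) t = 0 := by
  induction t using TensorProduct.induction_on with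
  | zero => simp
  | tmul y h =>
    rw [mulRightMix_abar_tmul, alpha32_tmul_tmul_eq_neg_alpha31 abar hanti, map_neg,
      ← LinearMap.comp_apply, h31, LinearMap.zero_apply, neg_zero, smul_zero]
  | add t t' ht ht' => simp only [map_add, ht, ht', add_zero]

/-- Right multiplication by `v ∈ V` in `Y`, written in the coordinates `(y, y' ⊗ h) ↦ y + y' h`
of `Y_B ⊕ Y_B ⊗ V_F`: moving `b ∈ V_B` past `h` costs a sign, and `h f = α(h ∧ f)`
modulo `R_F`. -/
noncomputable def act : VB × VF →ₗ[k] Module.End k (QuotBy RB × (QuotBy RB ⊗[k] VF)) :=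
  LinearMap.mk₂ k (fun v m => (m.1 * QuotBy.mk RB (ExteriorAlgebra.ι k v.1),
      m.1 ⊗ₜ v.2 - mulRightB RB v.1 m.2 + mulRightF RB abar v.2 m.2))
    (fun v v' m => by ext <;> simp [mul_add, tmul_add]; abel)
    (fun c v m => by ext <;> simp [smul_sub, smul_add])
    (fun v m m' => by ext <;> simp [add_mul, add_tmul]; abel)
    (fun c m m' => by ext <;> simp [smul_sub, smul_add, smul_tmul'])

@[simp] lemma act_apply (v : VB × VF) (m : QuotBy RB × (QuotBy RB ⊗[k] VF)) :
    act RB abar v m = (m.1 * QuotBy.mk RB (ExteriorAlgebra.ι k v.1),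
      m.1 ⊗ₜ v.2 - mulRightB RB v.1 m.2 + mulRightF RB abar v.2 m.2) := rfl

variable {abar} (hanti : ∀ f, abar (f ⊗ₜ f) = 0)
  (h31 : (QuotBy.mk RB).toLinearMap.rTensor VF ∘ₗ alpha31 k VB VF abar = 0)
include hanti h31

lemma act_act (v : VB × VF) (m : QuotBy RB × (QuotBy RB ⊗[k] VF)) :
    act RB abar v (act RB abar v m) = 0 := by
  obtain ⟨b, f⟩ := v
  obtain ⟨y, t⟩ := m
  ext
  · simp [mul_assoc, ← map_mul]
  · simp [hanti, mulRightB_mulRightB, mulRightF_mulRightF RB abar h31, mulRightB_mulRightF]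

noncomputable def rightAction :
    ExteriorAlgebra k (VB × VF) →ₐ[k] (Module.End k (QuotBy RB × (QuotBy RB ⊗[k] VF)))ᵐᵒᵖ :=
  ExteriorAlgebra.lift k ⟨(MulOpposite.opLinearEquiv k).toLinearMap ∘ₗ act RB abar, fun v => by
    rw [LinearMap.comp_apply, LinearEquiv.coe_coe, MulOpposite.coe_opLinearEquiv,
      ← MulOpposite.op_mul, MulOpposite.op_eq_zero_iff]
    exact LinearMap.ext (act_act RB hanti h31 v)⟩

@[simp] lemma rightAction_ι (v : VB × VF) :
    (rightAction RB hanti h31 (ExteriorAlgebra.ι k v)).unop = act RB abar v := by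
  simp [rightAction]

@[simp] lemma rightAction_mul (x y : ExteriorAlgebra k (VB × VF)) :
    (rightAction RB hanti h31 (x * y)).unop =
      (rightAction RB hanti h31 y).unop * (rightAction RB hanti h31 x).unop := by
  rw [map_mul, MulOpposite.unop_mul]

lemma rightAction_incB_apply_zero (x : ExteriorAlgebra k VB) (y : QuotBy RB) :
    (rightAction RB hanti h31 (incB k VB VF x)).unop (y, 0) = (y * QuotBy.mk RB x, 0) := by
  induction x using ExteriorAlgebra.induction generalizing y with
  | algebraMap r => simp [Algebra.smul_def, Algebra.commutes]
  | ι b => simp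
  | mul x x' hx hx' => simp [hx, hx', mul_assoc]
  | add x x' hx hx' => simp [hx, hx', mul_add]

lemma rightAction_incB_apply_of_mem_sq {x : ExteriorAlgebra k VB}
    (hx : x ∈ LinearMap.range (ExteriorAlgebra.ι k (M := VB)) ^ 2)
    (m : QuotBy RB × (QuotBy RB ⊗[k] VF)) :
    (rightAction RB hanti h31 (incB k VB VF x)).unop m =
      (m.1 * QuotBy.mk RB x, ((LinearMap.mul k _).flip (QuotBy.mk RB x)).rTensor VF m.2) := by
  rw [pow_two] at hx
  induction hx using Submodule.mul_induction_on' generalizing m with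
  | mem_mul_mem a ha b hb =>
    obtain ⟨a, rfl⟩ := ha
    obtain ⟨b, rfl⟩ := hb
    simp [mul_assoc, mulRightB_mulRightB]
  | add x _ x' _ hx hx' => ext <;> simp [hx, hx', mul_add]

lemma rightAction_mixMap_apply (u : VB ⊗[k] VF) (y : QuotBy RB) (t : QuotBy RB ⊗[k] VF) :
    (rightAction RB hanti h31 (mixMap k VB VF u)).unop (y, t) =
      (0, y • (ιB RB).rTensor VF u - mulRightMix RB abar u t) := by
  induction u using TensorProduct.induction_on with
  | zero => ext <;> simp
  | tmul c f => simp [smul_tmul', sub_eq_add_neg]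
  | add u u' hu hu' =>
    simp only [map_add, MulOpposite.unop_add, LinearMap.add_apply, hu, hu', Prod.mk_add_mk,
      add_zero, smul_add]
    abel_nf

lemma rightAction_ι_mul_ι_inr (g f : VF) :
    rightAction RB hanti h31 (ExteriorAlgebra.ι k ((0 : VB), g) * ExteriorAlgebra.ι k (0, f)) =
      rightAction RB hanti h31 (mixMap k VB VF (abar (g ⊗ₜ f))) := by
  refine MulOpposite.unop_injective (LinearMap.ext fun ⟨y, t⟩ => ?_)
  rw [rightAction_mixMap_apply, mulRightMix_abar_eq_zero RB abar hanti h31]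
  simp [mulRightF_mulRightF RB abar h31]

end FiberModule

section Relations

variable {R RF : Submodule k (ExteriorAlgebra k (VB × VF))}
  (RB : Submodule k (ExteriorAlgebra k VB)) {αmap : ExteriorAlgebra k VF →ₗ[k] VB ⊗[k] VF}

lemma eq_incF_sub_mixMap
    (hα : ∀ x ∈ RF, mixMap k VB VF (αmap (projF k VB VF x)) =
      incF k VB VF (projF k VB VF x) - x) {x : ExteriorAlgebra k (VB × VF)} (hx : x ∈ RF) :
    x = incF k VB VF (projF k VB VF x) - mixMap k VB VF (αmap (projF k VB VF x)) := by
  rw [hα x hx, sub_sub_cancel]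

lemma mk_mixMap_comp_wedgeF_tmul (hRF : RF ≤ R)
    (h1surj : LinearMap.range (ExteriorAlgebra.ι k (M := VF)) ^ 2 ≤
      Submodule.map (projF k VB VF).toLinearMap RF)
    (hα : ∀ x ∈ RF, mixMap k VB VF (αmap (projF k VB VF x)) =
      incF k VB VF (projF k VB VF x) - x) (g f : VF) :
    QuotBy.mk R (mixMap k VB VF ((αmap ∘ₗ wedgeF k VF) (g ⊗ₜ f))) =
      QuotBy.mk R (ExteriorAlgebra.ι k ((0 : VB), g)) *
        QuotBy.mk R (ExteriorAlgebra.ι k (0, f)) := by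
  obtain ⟨x, hx, hxw⟩ := h1surj (ι_mul_ι_mem_sq g f)
  rw [AlgHom.toLinearMap_apply] at hxw
  rw [LinearMap.comp_apply, wedgeF_tmul, ← hxw, hα x hx, map_sub, QuotBy.mk_eq_zero R (hRF hx),
    sub_zero, hxw]
  simp

variable
  (h31 : (QuotBy.mk RB).toLinearMap.rTensor VF ∘ₗ alpha31 k VB VF (αmap ∘ₗ wedgeF k VF) = 0)

lemma rightAction_incF_eq_rightAction_mixMap {w : ExteriorAlgebra k VF}
    (hw : w ∈ LinearMap.range (ExteriorAlgebra.ι k (M := VF)) ^ 2) :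
    rightAction RB (comp_wedgeF_tmul_self αmap) h31 (incF k VB VF w) =
      rightAction RB (comp_wedgeF_tmul_self αmap) h31 (mixMap k VB VF (αmap w)) := by
  rw [pow_two] at hw
  induction hw using Submodule.mul_induction_on' with
  | mem_mul_mem a ha b hb =>
    obtain ⟨g, rfl⟩ := ha
    obtain ⟨f, rfl⟩ := hb
    simpa using rightAction_ι_mul_ι_inr RB (comp_wedgeF_tmul_self αmap) h31 g f
  | add w _ w' _ hw hw' => simp only [map_add, hw, hw']

lemma rightAction_eq_zero_of_mem
    (hRB : RB ≤ LinearMap.range (ExteriorAlgebra.ι k (M := VB)) ^ 2)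
    (hRF : RF ≤ LinearMap.range (mixMap k VB VF) ⊔
      LinearMap.range ((ExteriorAlgebra.ι k).comp (LinearMap.inr k VB VF)) ^ 2)
    (hR : R ≤ Submodule.map (incB k VB VF).toLinearMap RB ⊔ RF)
    (hα : ∀ x ∈ RF, mixMap k VB VF (αmap (projF k VB VF x)) =
      incF k VB VF (projF k VB VF x) - x)
    {x : ExteriorAlgebra k (VB × VF)} (hx : x ∈ R) :
    rightAction RB (comp_wedgeF_tmul_self αmap) h31 x = 0 := by
  obtain ⟨p, ⟨r, hr, rfl⟩, q, hq, rfl⟩ := Submodule.mem_sup.mp (hR hx)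
  have hr0 : rightAction RB (comp_wedgeF_tmul_self αmap) h31 (incB k VB VF r) = 0 := by
    refine MulOpposite.unop_injective (LinearMap.ext fun m => ?_)
    rw [rightAction_incB_apply_of_mem_sq RB _ h31 (hRB hr), QuotBy.mk_eq_zero RB hr]
    simp
  have hq0 : rightAction RB (comp_wedgeF_tmul_self αmap) h31 q = 0 := by
    rw [eq_incF_sub_mixMap hα hq, map_sub,
      rightAction_incF_eq_rightAction_mixMap RB h31 (projF_mem_sq (hRF hq)), sub_self]
  rw [AlgHom.toLinearMap_apply, map_add, hr0, hq0, add_zero]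

end Relations

section Assemble

variable (R : Submodule k (ExteriorAlgebra k (VB × VF)))
  {RB : Submodule k (ExteriorAlgebra k VB)} (φ : QuotBy RB →ₐ[k] QuotBy R)

noncomputable def fiberMap : QuotBy RB ⊗[k] VF →ₗ[k] QuotBy R :=
  TensorProduct.lift ((LinearMap.mul k (QuotBy R)).compl₁₂ φ.toLinearMap
    ((QuotBy.mk R).toLinearMap ∘ₗ (ExteriorAlgebra.ι k).comp (LinearMap.inr k VB VF)))

@[simp] lemma fiberMap_tmul (y : QuotBy RB) (h : VF) :
    fiberMap R φ (y ⊗ₜ h) = φ y * QuotBy.mk R (ExteriorAlgebra.ι k ((0 : VB), h)) := by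
  simp [fiberMap]

lemma fiberMap_smul (y : QuotBy RB) (t : QuotBy RB ⊗[k] VF) :
    fiberMap R φ (y • t) = φ y * fiberMap R φ t := by
  induction t using TensorProduct.induction_on with
  | zero => simp
  | tmul y' h => simp [smul_tmul', mul_assoc]
  | add t t' ht ht' => simp only [smul_add, map_add, ht, ht', mul_add]

noncomputable def assemble : QuotBy RB × (QuotBy RB ⊗[k] VF) →ₗ[k] QuotBy R :=
  φ.toLinearMap.coprod (fiberMap R φ)

lemma assemble_apply (m : QuotBy RB × (QuotBy RB ⊗[k] VF)) :
    assemble R φ m = φ m.1 + fiberMap R φ m.2 := rfl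

variable {R φ} (hφ : φ.comp (QuotBy.mk RB) = (QuotBy.mk R).comp (incB k VB VF))
include hφ

lemma map_mk_ι (b : VB) :
    φ (QuotBy.mk RB (ExteriorAlgebra.ι k b)) = QuotBy.mk R (ExteriorAlgebra.ι k (b, (0 : VF))) := by
  simpa using AlgHom.congr_fun hφ (ExteriorAlgebra.ι k b)

lemma fiberMap_rTensor_ιB (u : VB ⊗[k] VF) :
    fiberMap R φ ((ιB RB).rTensor VF u) = QuotBy.mk R (mixMap k VB VF u) := by
  induction u using TensorProduct.induction_on with
  | zero => simp
  | tmul c f => simp [map_mk_ι hφ]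
  | add u u' hu hu' => simp only [map_add, hu, hu']

lemma fiberMap_mulRightB (b : VB) (t : QuotBy RB ⊗[k] VF) :
    fiberMap R φ (mulRightB RB b t) =
      -(fiberMap R φ t * QuotBy.mk R (ExteriorAlgebra.ι k (b, (0 : VF)))) := by
  induction t using TensorProduct.induction_on with
  | zero => simp
  | tmul y h => simp [map_mk_ι hφ, mul_assoc, map_ι_mul_map_ι_eq_neg (QuotBy.mk R) (b, 0)]
  | add t t' ht ht' => simp only [map_add, ht, ht', add_mul, neg_add]

variable {abar : VF ⊗[k] VF →ₗ[k] VB ⊗[k] VF}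
  (hKR : ∀ g f, QuotBy.mk R (mixMap k VB VF (abar (g ⊗ₜ f))) =
    QuotBy.mk R (ExteriorAlgebra.ι k ((0 : VB), g)) * QuotBy.mk R (ExteriorAlgebra.ι k (0, f)))
include hKR

lemma fiberMap_mulRightF (f : VF) (t : QuotBy RB ⊗[k] VF) :
    fiberMap R φ (mulRightF RB abar f t) =
      fiberMap R φ t * QuotBy.mk R (ExteriorAlgebra.ι k ((0 : VB), f)) := by
  induction t using TensorProduct.induction_on with
  | zero => simp
  | tmul y h => simp [fiberMap_smul, fiberMap_rTensor_ιB hφ, hKR, mul_assoc]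
  | add t t' ht ht' => simp only [map_add, ht, ht', add_mul]

lemma assemble_act (v : VB × VF) (m : QuotBy RB × (QuotBy RB ⊗[k] VF)) :
    assemble R φ (act RB abar v m) = assemble R φ m * QuotBy.mk R (ExteriorAlgebra.ι k v) := by
  obtain ⟨b, f⟩ := v
  have hv : ExteriorAlgebra.ι k (b, f) =
      ExteriorAlgebra.ι k (b, (0 : VF)) + ExteriorAlgebra.ι k ((0 : VB), f) := by
    rw [← map_add, Prod.mk_add_mk, add_zero, zero_add]
  simp only [act_apply, assemble_apply, map_add, map_sub, map_mul, map_mk_ι hφ,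
    fiberMap_tmul, fiberMap_mulRightB hφ, fiberMap_mulRightF hφ hKR, hv, mul_add, add_mul]
  abel

variable (hanti : ∀ f, abar (f ⊗ₜ f) = 0)
  (h31 : (QuotBy.mk RB).toLinearMap.rTensor VF ∘ₗ alpha31 k VB VF abar = 0)

lemma assemble_rightAction (x : ExteriorAlgebra k (VB × VF)) (m : QuotBy RB × (QuotBy RB ⊗[k] VF)) :
    assemble R φ ((rightAction RB hanti h31 x).unop m) = assemble R φ m * QuotBy.mk R x := by
  induction x using ExteriorAlgebra.induction generalizing m with
  | algebraMap r => simp [Algebra.smul_def, Algebra.commutes]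
  | ι v => rw [rightAction_ι, assemble_act hφ hKR]
  | mul x x' hx hx' => simp [hx, hx', mul_assoc]
  | add x x' hx hx' =>
    simp only [map_add, MulOpposite.unop_add, LinearMap.add_apply, hx, hx', mul_add]

theorem assemble_bijective (hkill : ∀ x ∈ R, rightAction RB hanti h31 x = 0) :
    Function.Bijective (assemble R φ) := by
  let Ψ : QuotBy R →ₗ[k] QuotBy RB × (QuotBy RB ⊗[k] VF) :=
    LinearMap.applyₗ (1, 0) ∘ₗ (MulOpposite.opLinearEquiv k).symm.toLinearMap ∘ₗ
      (QuotBy.lift (rightAction RB hanti h31) hkill).toLinearMap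
  have hΨ (x : ExteriorAlgebra k (VB × VF)) :
      Ψ (QuotBy.mk R x) = (rightAction RB hanti h31 x).unop (1, 0) := by
    simp [Ψ]
  have hΨφ (y : QuotBy RB) : Ψ (φ y) = (y, 0) := by
    obtain ⟨x, rfl⟩ := QuotBy.mk_surjective RB y
    rw [← AlgHom.comp_apply, hφ, AlgHom.comp_apply, hΨ, rightAction_incB_apply_zero, one_mul]
  have hΨfib (t : QuotBy RB ⊗[k] VF) : Ψ (fiberMap R φ t) = (0, t) := by
    induction t using TensorProduct.induction_on with
    | zero => rw [map_zero, map_zero]; rfl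
    | tmul y h =>
      obtain ⟨x, rfl⟩ := QuotBy.mk_surjective RB y
      rw [fiberMap_tmul, ← AlgHom.comp_apply, hφ, AlgHom.comp_apply, ← map_mul, hΨ]
      simp [rightAction_incB_apply_zero]
    | add t t' ht ht' => rw [map_add, map_add, ht, ht', Prod.mk_add_mk, add_zero]
  rw [Function.bijective_iff_has_inverse]
  refine ⟨Ψ, fun ⟨y, t⟩ => ?_, fun z => ?_⟩
  · rw [assemble_apply, map_add, hΨφ, hΨfib, Prod.mk_add_mk, add_zero, zero_add]
  · obtain ⟨x, rfl⟩ := QuotBy.mk_surjective R z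
    rw [hΨ, assemble_rightAction hφ hKR, assemble_apply]
    simp

end Assemble

end QuadraticFibration

open QuadraticFibration

theorem stmt_18_general (k : Type*) [Field k] [CharZero k]
    (VB VF : Type*) [AddCommGroup VB] [Module k VB]
    [AddCommGroup VF] [Module k VF]
    (R RF : Submodule k (ExteriorAlgebra k (VB × VF)))
    (RB : Submodule k (ExteriorAlgebra k VB))
    -- `R_B ⊆ ⋀²V_B`
    (hRB : RB ≤ LinearMap.range (ExteriorAlgebra.ι k (M := VB)) ^ 2)
    -- `R_F ⊆ (V_B ⊗ V_F) ⊕ ⋀²V_F`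
    (hRF : RF ≤ LinearMap.range (mixMap k VB VF) ⊔
      LinearMap.range ((ExteriorAlgebra.ι k).comp (LinearMap.inr k VB VF)) ^ 2)
    -- `R = R_B ⊕ R_F`
    (hRsum : R = Submodule.map (incB k VB VF).toLinearMap RB ⊔ RF)
    -- (1): `π_F` restricts to a linear isomorphism `R_F ≅ ⋀²V_F`
    (h1surj : Submodule.map (projF k VB VF).toLinearMap RF =
      LinearMap.range (ExteriorAlgebra.ι k (M := VF)) ^ 2)
    -- the map `α : ⋀²V_F → V_B ⊗ V_F`, `α(w) = −π_mix((π_F|_{R_F})⁻¹ w)`,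
    -- characterized by `μ(α(π_F x)) = −π_mix x = incF(π_F x) − x` for `x ∈ R_F`
    (αmap : ExteriorAlgebra k VF →ₗ[k] VB ⊗[k] VF)
    (hα : ∀ x ∈ RF,
      mixMap k VB VF (αmap (projF k VB VF x)) = incF k VB VF (projF k VB VF x) - x)
    -- (2): associativity, `im(α₃⁽¹⁾ − α₃⁽²⁾) ⊆ im(R_B ⊗ V_F)`;
    -- here `ᾱ = α ∘ (canonical surjection V_F ⊗ V_F → ⋀²V_F)`
    (h2 : LinearMap.range
        (alpha31 k VB VF (αmap ∘ₗ wedgeF k VF) - alpha32 k VB VF (αmap ∘ₗ wedgeF k VF)) ≤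
      LinearMap.range (TensorProduct.map RB.subtype (LinearMap.id (R := k) (M := VF)))) :
    ∃ φ : RingQuot (fun a b : ExteriorAlgebra k VB => b = 0 ∧ a ∈ RB) →ₐ[k]
        RingQuot (fun a b : ExteriorAlgebra k (VB × VF) => b = 0 ∧ a ∈ R),
      -- `φ` is the algebra homomorphism `Y_B → Y` induced by `V_B ↪ V`
      φ.comp (RingQuot.mkAlgHom k (fun a b : ExteriorAlgebra k VB => b = 0 ∧ a ∈ RB)) =
        (RingQuot.mkAlgHom k
          (fun a b : ExteriorAlgebra k (VB × VF) => b = 0 ∧ a ∈ R)).comp (incB k VB VF) ∧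
      Function.Injective φ ∧
      -- `Y_B ⊕ (Y_B ⊗ V_F) → Y`, `(y, y′ ⊗ f) ↦ φ y + φ y′ · [ι f]`, is bijective
      Function.Bijective (fun p :
          RingQuot (fun a b : ExteriorAlgebra k VB => b = 0 ∧ a ∈ RB) ×
          (RingQuot (fun a b : ExteriorAlgebra k VB => b = 0 ∧ a ∈ RB) ⊗[k] VF) =>
        φ p.1 + TensorProduct.lift
          ((LinearMap.mul k
              (RingQuot (fun a b : ExteriorAlgebra k (VB × VF) => b = 0 ∧ a ∈ R))).compl₁₂
            φ.toLinearMap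
            ((RingQuot.mkAlgHom k
                (fun a b : ExteriorAlgebra k (VB × VF) => b = 0 ∧ a ∈ R)).toLinearMap ∘ₗ
              (ExteriorAlgebra.ι k).comp (LinearMap.inr k VB VF))) p.2) := by
  have hanti := comp_wedgeF_tmul_self (VB := VB) αmap
  have h31 := rTensor_mk_comp_alpha31_eq_zero RB _ hanti h2
  have hBR (x : ExteriorAlgebra k VB) (hx : x ∈ RB) : QuotBy.mk R (incB k VB VF x) = 0 :=
    QuotBy.mk_eq_zero R (hRsum ▸ Submodule.mem_sup_left ⟨x, hx, rfl⟩)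
  set φ := QuotBy.lift ((QuotBy.mk R).comp (incB k VB VF)) hBR
  have hφ : φ.comp (QuotBy.mk RB) = (QuotBy.mk R).comp (incB k VB VF) := QuotBy.lift_comp_mk _ _
  have hKR := mk_mixMap_comp_wedgeF_tmul (hRsum ▸ le_sup_right) h1surj.ge hα
  have hbij := assemble_bijective hφ hKR hanti h31
    fun x hx => rightAction_eq_zero_of_mem RB h31 hRB hRF hRsum.le hα hx
  refine ⟨φ, hφ, fun a b hab => ?_, hbij⟩
  simpa using hbij.1 (show assemble R φ (a, 0) = assemble R φ (b, 0) by simpa [assemble_apply])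

/-- Freeness of a quadratic algebra over its base: `Y = ⋀V/⟨R⟩` is a free
`Y_B = ⋀V_B/⟨R_B⟩`-module with fiber `k ⊕ V_F`, under the graph and
associativity conditions on the relations. -/
theorem stmt_18 (k : Type*) [Field k] [CharZero k]
    (VB VF : Type*) [AddCommGroup VB] [Module k VB] [FiniteDimensional k VB]
    [AddCommGroup VF] [Module k VF] [FiniteDimensional k VF]
    (R RF : Submodule k (ExteriorAlgebra k (VB × VF)))
    (RB : Submodule k (ExteriorAlgebra k VB))
    -- `R_B ⊆ ⋀²V_B`
    (hRB : RB ≤ LinearMap.range (ExteriorAlgebra.ι k (M := VB)) ^ 2)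
    -- `R_F ⊆ (V_B ⊗ V_F) ⊕ ⋀²V_F`
    (hRF : RF ≤ LinearMap.range (mixMap k VB VF) ⊔
      LinearMap.range ((ExteriorAlgebra.ι k).comp (LinearMap.inr k VB VF)) ^ 2)
    -- `R = R_B ⊕ R_F`
    (hRsum : R = Submodule.map (incB k VB VF).toLinearMap RB ⊔ RF)
    (hRdisj : Disjoint (Submodule.map (incB k VB VF).toLinearMap RB) RF)
    -- (1): `π_F` restricts to a linear isomorphism `R_F ≅ ⋀²V_F`
    (h1inj : ∀ x ∈ RF, projF k VB VF x = 0 → x = 0)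
    (h1surj : Submodule.map (projF k VB VF).toLinearMap RF =
      LinearMap.range (ExteriorAlgebra.ι k (M := VF)) ^ 2)
    -- the map `α : ⋀²V_F → V_B ⊗ V_F`, `α(w) = −π_mix((π_F|_{R_F})⁻¹ w)`,
    -- characterized by `μ(α(π_F x)) = −π_mix x = incF(π_F x) − x` for `x ∈ R_F`
    (αmap : ExteriorAlgebra k VF →ₗ[k] VB ⊗[k] VF)
    (hα : ∀ x ∈ RF,
      mixMap k VB VF (αmap (projF k VB VF x)) = incF k VB VF (projF k VB VF x) - x)
    -- (2): associativity, `im(α₃⁽¹⁾ − α₃⁽²⁾) ⊆ im(R_B ⊗ V_F)`;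
    -- here `ᾱ = α ∘ (canonical surjection V_F ⊗ V_F → ⋀²V_F)`
    (h2 : LinearMap.range
        (alpha31 k VB VF (αmap ∘ₗ wedgeF k VF) - alpha32 k VB VF (αmap ∘ₗ wedgeF k VF)) ≤
      LinearMap.range (TensorProduct.map RB.subtype (LinearMap.id (R := k) (M := VF)))) :
    ∃ φ : RingQuot (fun a b : ExteriorAlgebra k VB => b = 0 ∧ a ∈ RB) →ₐ[k]
        RingQuot (fun a b : ExteriorAlgebra k (VB × VF) => b = 0 ∧ a ∈ R),
      -- `φ` is the algebra homomorphism `Y_B → Y` induced by `V_B ↪ V`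
      φ.comp (RingQuot.mkAlgHom k (fun a b : ExteriorAlgebra k VB => b = 0 ∧ a ∈ RB)) =
        (RingQuot.mkAlgHom k
          (fun a b : ExteriorAlgebra k (VB × VF) => b = 0 ∧ a ∈ R)).comp (incB k VB VF) ∧
      Function.Injective φ ∧
      -- `Y_B ⊕ (Y_B ⊗ V_F) → Y`, `(y, y′ ⊗ f) ↦ φ y + φ y′ · [ι f]`, is bijective
      Function.Bijective (fun p :
          RingQuot (fun a b : ExteriorAlgebra k VB => b = 0 ∧ a ∈ RB) ×
          (RingQuot (fun a b : ExteriorAlgebra k VB => b = 0 ∧ a ∈ RB) ⊗[k] VF) =>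
        φ p.1 + TensorProduct.lift
          ((LinearMap.mul k
              (RingQuot (fun a b : ExteriorAlgebra k (VB × VF) => b = 0 ∧ a ∈ R))).compl₁₂
            φ.toLinearMap
            ((RingQuot.mkAlgHom k
                (fun a b : ExteriorAlgebra k (VB × VF) => b = 0 ∧ a ∈ R)).toLinearMap ∘ₗ
              (ExteriorAlgebra.ι k).comp (LinearMap.inr k VB VF))) p.2) :=
  stmt_18_general k VB VF R RF RB hRB hRF hRsum h1surj αmap hα h2
end
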